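/- arXiv:2602.11768 — 6 statements merged into one kernel-verified Lean document; each statement's English description precedes it below -/
import Mathlib

section
/- Let (Γ, 𝔊, γ) be a measure space, let θ : Γ → Γ be a measurable involution (θ∘θ = id) that preserves γ, let τ ≥ 0, and let (Φ_t)_{t∈[0,τ]} and (Ψ_t)_{t∈[0,τ]} be families of measurable maps Γ → Γ such that Φ_τ preserves γ and such that the time-reversal identity Φ_t(x) = θ(Ψ_{τ−t}(θ(Φ_τ(x)))) holds for all t ∈ [0,τ] and all x ∈ Γ. Let S, Ŝ : Γ → ℝ be measurable functions such that ν := e^{−S}·γ and ν̂ := e^{−Ŝ}·γ are probability measures. Then for every n ≥ 1, all times t_1,…,t_n ∈ [0,τ], and every bounded measurable f : Γⁿ → ℝ, ∫ f(θ(Ψ_{τ−t_1}(x)),…,θ(Ψ_{τ−t_n}(x))) dν̂(x) = ∫ e^{S(x) − Ŝ(θ(Φ_τ(x)))} f(Φ_{t_1}(x),…,Φ_{t_n}(x)) dν(x). -/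
/-!
Substitute `y = θ (Φ τ x)` in the integral against `ν̂ = e^{-Ŝ} γ`. The substitution preserves `γ`,
since both `θ` and `Φ τ` do, and by the time-reversal identity it turns `θ (Ψ (τ - t) y)` into
`Φ t x`; writing `e^{-Ŝ(θ (Φ τ x))} = e^{-S x} e^{S x - Ŝ(θ (Φ τ x))}` then exhibits the
integral against `ν = e^{-S} γ`.
-/

open MeasureTheory

theorem integral_withDensity_ofReal_eq_integral_mul {α : Type*} [MeasurableSpace α]
    {μ : Measure α} {ρ : α → ℝ} (hρ : Measurable ρ) (hρ_nonneg : ∀ x, 0 ≤ ρ x) (g : α → ℝ) :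
    ∫ x, g x ∂μ.withDensity (fun x => ENNReal.ofReal (ρ x)) = ∫ x, ρ x * g x ∂μ := by
  rw [integral_withDensity_eq_integral_toReal_smul hρ.ennreal_ofReal
    (ae_of_all _ fun _ => ENNReal.ofReal_lt_top)]
  simp only [ENNReal.toReal_ofReal (hρ_nonneg _), smul_eq_mul]

theorem MeasureTheory.MeasurePreserving.integral_comp_of_aestronglyMeasurable
    {α β G : Type*} [MeasurableSpace α] [MeasurableSpace β] [NormedAddCommGroup G]
    [NormedSpace ℝ G] {μ : Measure α} {ν : Measure β} {T : α → β}
    (hT : MeasurePreserving T μ ν) {g : β → G} (hg : AEStronglyMeasurable g ν) :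
    ∫ x, g (T x) ∂μ = ∫ y, g y ∂ν := by
  rw [← hT.map_eq] at hg ⊢
  exact (integral_map hT.measurable.aemeasurable hg).symm

theorem hamiltonian_fluctuation_relation_general
    {Γ : Type*} [MeasurableSpace Γ] (γ : Measure Γ)
    (θ : Γ → Γ)
    (hθpres : MeasurePreserving θ γ γ)
    (τ : ℝ)
    (Φ Ψ : ℝ → Γ → Γ)
    (hΨmeas : ∀ t ∈ Set.Icc (0 : ℝ) τ, Measurable (Ψ t))
    (hΦτpres : MeasurePreserving (Φ τ) γ γ)
    (hrev : ∀ t ∈ Set.Icc (0 : ℝ) τ, ∀ x : Γ, Φ t x = θ (Ψ (τ - t) (θ (Φ τ x))))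
    (S Shat : Γ → ℝ) (hS : Measurable S) (hShat : Measurable Shat)
    (ν νhat : Measure Γ)
    (hν : ν = γ.withDensity (fun x => ENNReal.ofReal (Real.exp (-S x))))
    (hνhat : νhat = γ.withDensity (fun x => ENNReal.ofReal (Real.exp (-Shat x))))
    (n : ℕ) (t : Fin n → ℝ) (ht : ∀ i, t i ∈ Set.Icc (0 : ℝ) τ)
    (f : (Fin n → Γ) → ℝ) (hfmeas : Measurable f) :
    ∫ x, f (fun i => θ (Ψ (τ - t i) x)) ∂νhat
      = ∫ x, Real.exp (S x - Shat (θ (Φ τ x))) * f (fun i => Φ (t i) x) ∂ν := by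
  have hF : Measurable fun y => f (fun i => θ (Ψ (τ - t i) y)) :=
    hfmeas.comp <| measurable_pi_lambda _ fun i => hθpres.measurable.comp <|
      hΨmeas _ ⟨by linarith [(ht i).2], by linarith [(ht i).1]⟩
  have hρ : Measurable fun x => Real.exp (-S x) := by fun_prop
  have hρhat : Measurable fun x => Real.exp (-Shat x) := by fun_prop
  rw [hνhat, hν,
    integral_withDensity_ofReal_eq_integral_mul hρhat fun _ => (Real.exp_pos _).le,
    integral_withDensity_ofReal_eq_integral_mul hρ fun _ => (Real.exp_pos _).le,
    ← (hθpres.comp hΦτpres).integral_comp_of_aestronglyMeasurable ?_]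
  · refine integral_congr_ae (ae_of_all _ fun x => ?_)
    simp only [Function.comp_apply, ← hrev _ (ht _), ← mul_assoc, ← Real.exp_add]
    congr 2
    ring
  · exact (hρhat.mul hF).aestronglyMeasurable

/-- **Abstract Hamiltonian fluctuation relation.**
`Γ` is the phase space with reference ("Liouville") measure `γ`, `θ` a measurable,
measure-preserving involution (time reversal), `Φ t` the forward flow and `Ψ t` the
time-reversed flow on the time window `[0, τ]`, linked by `Φ t = θ ∘ Ψ (τ−t) ∘ θ ∘ Φ τ`.
For initial probability measures `ν = e^{−S}·γ` and `ν̂ = e^{−Ŝ}·γ`, the time-reversed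
finite-dimensional distributions of the reversed process are related to those of the
forward process by the density `e^{S(x) − Ŝ(θ(Φ τ x))}`. -/
theorem hamiltonian_fluctuation_relation
    {Γ : Type*} [MeasurableSpace Γ] (γ : Measure Γ)
    (θ : Γ → Γ) (hθmeas : Measurable θ) (hθinvol : ∀ x, θ (θ x) = x)
    (hθpres : MeasurePreserving θ γ γ)
    (τ : ℝ) (hτ : 0 ≤ τ)
    (Φ Ψ : ℝ → Γ → Γ)
    (hΦmeas : ∀ t ∈ Set.Icc (0 : ℝ) τ, Measurable (Φ t))
    (hΨmeas : ∀ t ∈ Set.Icc (0 : ℝ) τ, Measurable (Ψ t))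
    (hΦτpres : MeasurePreserving (Φ τ) γ γ)
    (hrev : ∀ t ∈ Set.Icc (0 : ℝ) τ, ∀ x : Γ, Φ t x = θ (Ψ (τ - t) (θ (Φ τ x))))
    (S Shat : Γ → ℝ) (hS : Measurable S) (hShat : Measurable Shat)
    (ν νhat : Measure Γ)
    (hν : ν = γ.withDensity (fun x => ENNReal.ofReal (Real.exp (-S x))))
    (hνhat : νhat = γ.withDensity (fun x => ENNReal.ofReal (Real.exp (-Shat x))))
    (hνprob : IsProbabilityMeasure ν) (hνhatprob : IsProbabilityMeasure νhat)
    (n : ℕ) (hn : 1 ≤ n) (t : Fin n → ℝ) (ht : ∀ i, t i ∈ Set.Icc (0 : ℝ) τ)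
    (f : (Fin n → Γ) → ℝ) (hfmeas : Measurable f)
    (C : ℝ) (hfbdd : ∀ y, |f y| ≤ C) :
    ∫ x, f (fun i => θ (Ψ (τ - t i) x)) ∂νhat
      = ∫ x, Real.exp (S x - Shat (θ (Φ τ x))) * f (fun i => Φ (t i) x) ∂ν :=
  hamiltonian_fluctuation_relation_general γ θ hθpres τ Φ Ψ hΨmeas hΦτpres hrev S Shat hS hShat ν
    νhat hν hνhat n t ht f hfmeas
end

section
/- Let ι be a nonempty directed index set with its associated nontrivial filter l, let r : ι → (0,∞) satisfy r_λ → +∞ along l, and for each λ let μ_λ and μ̂_λ be Borel probability measures on ℝ satisfying the detailed fluctuation relation μ̂_λ(ds) = e^{−s} μ_λ(ds) (μ̂_λ has density s ↦ e^{−s} with respect to μ_λ). Let J ⊆ ℝ be an interval and let I, Î : ℝ → [0,+∞] be lower semicontinuous functions such that for every Borel set S ⊆ J: −inf_{s∈int S} I(s) ≤ liminf_λ r_λ^{−1} log μ_λ(r_λ·S) and limsup_λ r_λ^{−1} log μ_λ(r_λ·S) ≤ −inf_{s∈cl S} I(s), and the same two bounds hold for μ̂_λ with Î in place of I. Then Î(s)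 = I(s) + s for every s in the interior of J. -/
/-!
On `r • S` with `S ⊆ [a, b]` the density `e^{-s}` of `μ̂` lies between `e^{-rb}` and `e^{-ra}`,
so `r⁻¹ log μ̂(r • S)` and `r⁻¹ log μ(r • S)` differ by an amount between `-b` and `-a`. Feeding
the balls `S = B(s, ε)` into the large deviation bounds of both families gives
`inf_{B̄(s, ε)} I + s - ε ≤ Î s` and `inf_{B̄(s, ε)} Î ≤ I s + s + ε`, and by lower
semicontinuity both infima converge to the value at `s` as `ε → 0`.
-/

open MeasureTheory Filter Set Metric Topology
open scoped ENNReal Pointwise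

namespace EReal

lemma inv_coe_mul_coe_mul_add {r : ℝ} (hr : 0 < r) (c : ℝ) (x : EReal) :
    (r : EReal)⁻¹ * (((r * c : ℝ) : EReal) + x) = c + (r : EReal)⁻¹ * x := by
  rw [← coe_inv, left_distrib_of_nonneg_of_ne_top (EReal.coe_nonneg.2 (inv_nonneg.2 hr.le))
    (coe_ne_top _), ← coe_mul, inv_mul_cancel_left₀ hr.ne']

lemma limsup_coe_add_le {ι : Type*} {l : Filter ι} [l.NeBot] (c : ℝ) (g : ι → EReal) :
    limsup (fun i => (c : EReal) + g i) l ≤ c + limsup g l := by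
  have h := limsup_add_le (u := fun _ => (c : EReal)) (v := g) (f := l)
    (.inl (by rw [limsup_const]; exact coe_ne_bot c))
    (.inl (by rw [limsup_const]; exact coe_ne_top c))
  rwa [limsup_const] at h

lemma coe_add_liminf_le {ι : Type*} {l : Filter ι} [l.NeBot] (c : ℝ) (g : ι → EReal) :
    c + liminf g l ≤ liminf (fun i => (c : EReal) + g i) l := by
  have h := le_liminf_add (u := fun _ => (c : EReal)) (v := g) (f := l)
  rwa [liminf_const] at h

lemma tendsto_add_coe {α : Type*} {l : Filter α} {f : α → EReal} {g : α → ℝ} {x : EReal}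
    {y : ℝ} (hf : Tendsto f l (𝓝 x)) (hg : Tendsto g l (𝓝 y)) :
    Tendsto (fun a => f a + g a) l (𝓝 (x + y)) :=
  (continuousAt_add (p := (x, (y : EReal))) (.inr (coe_ne_bot y)) (.inr (coe_ne_top y))
    ).tendsto.comp
    (hf.prodMk_nhds ((continuous_coe_real_ereal.tendsto y).comp hg))

lemma neg_coe_add_neg (c : ℝ) (x : EReal) : ((-c : ℝ) : EReal) + -x = -(x + c) := by
  rw [EReal.neg_add (.inr (coe_ne_top c)) (.inr (coe_ne_bot c)), sub_eq_add_neg, add_comm,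
    coe_neg]

end EReal

lemma LowerSemicontinuous.tendsto_iInf_closedBall {α β : Type*} [PseudoMetricSpace α]
    [CompleteLinearOrder β] [DenselyOrdered β] [TopologicalSpace β] [OrderTopology β]
    {f : α → β} (hf : LowerSemicontinuous f) (x : α) :
    Tendsto (fun ε => ⨅ t ∈ closedBall x ε, f t) (𝓝[>] 0) (𝓝 (f x)) := by
  refine tendsto_order.2 ⟨fun a ha => ?_, fun a ha => ?_⟩
  · obtain ⟨b, hab, hb⟩ := exists_between ha
    obtain ⟨δ, hδ, hball⟩ := Metric.eventually_nhds_iff.1 (hf x b hb)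
    filter_upwards [Ioo_mem_nhdsGT hδ] with ε hε
    exact hab.trans_le (le_iInf₂ fun t ht => (hball (ht.trans_lt hε.2)).le)
  · filter_upwards [self_mem_nhdsWithin] with ε (hε : 0 < ε)
    exact (iInf₂_le x (mem_closedBall_self hε.le)).trans_lt ha

lemma withDensity_exp_neg_apply_le {μ : Measure ℝ} {A : Set ℝ} {a b : ℝ} (hA : MeasurableSet A)
    (hAab : A ⊆ Icc a b) :
    μ.withDensity (fun s => ENNReal.ofReal (Real.exp (-s))) A
      ≤ ENNReal.ofReal (Real.exp (-a)) * μ A := by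
  rw [withDensity_apply _ hA, ← setLIntegral_const]
  exact setLIntegral_mono measurable_const fun s hs =>
    ENNReal.ofReal_le_ofReal (Real.exp_le_exp.2 (neg_le_neg (hAab hs).1))

lemma le_withDensity_exp_neg_apply {μ : Measure ℝ} {A : Set ℝ} {a b : ℝ} (hA : MeasurableSet A)
    (hAab : A ⊆ Icc a b) :
    ENNReal.ofReal (Real.exp (-b)) * μ A
      ≤ μ.withDensity (fun s => ENNReal.ofReal (Real.exp (-s))) A := by
  rw [withDensity_apply _ hA, ← setLIntegral_const]
  exact setLIntegral_mono' hA fun s hs =>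
    ENNReal.ofReal_le_ofReal (Real.exp_le_exp.2 (neg_le_neg (hAab hs).2))

lemma inv_mul_log_ofReal_exp_mul {r : ℝ} (hr : 0 < r) (c : ℝ) (m : ℝ≥0∞) :
    (r : EReal)⁻¹ * ENNReal.log (ENNReal.ofReal (Real.exp (r * c)) * m)
      = c + (r : EReal)⁻¹ * ENNReal.log m := by
  rw [ENNReal.log_mul_add, ENNReal.log_ofReal_of_pos (Real.exp_pos _), Real.log_exp,
    EReal.inv_coe_mul_coe_mul_add hr]

lemma inv_mul_log_mono {r : ℝ} (hr : 0 < r) :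
    Monotone fun m : ℝ≥0∞ => (r : EReal)⁻¹ * ENNReal.log m :=
  fun _ _ h => mul_le_mul_of_nonneg_left (ENNReal.log_monotone h)
    (by rw [← EReal.coe_inv]; exact EReal.coe_nonneg.2 (inv_nonneg.2 hr.le))

section Fluctuation

variable {ι : Type*} (r : ι → ℝ) (μ : ι → Measure ℝ)

noncomputable def rescaledLogMass (S : Set ℝ) (i : ι) : EReal :=
  ((r i)⁻¹ : EReal) * ENNReal.log (μ i (r i • S))

variable {r μ} {μhat : ι → Measure ℝ} {S : Set ℝ} {a b : ℝ} (hr : ∀ i, 0 < r i)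
  (hFR : ∀ i, μhat i = (μ i).withDensity (fun s => ENNReal.ofReal (Real.exp (-s))))
  (hS : MeasurableSet S) (hSab : S ⊆ Icc a b)
include hr hFR hS hSab

lemma rescaledLogMass_withDensity_le (i : ι) :
    rescaledLogMass r μhat S i ≤ ((-a : ℝ) : EReal) + rescaledLogMass r μ S i := by
  unfold rescaledLogMass
  rw [hFR i, ← inv_mul_log_ofReal_exp_mul (hr i), mul_neg]
  exact inv_mul_log_mono (hr i) (withDensity_exp_neg_apply_le
    (hS.const_smul_of_ne_zero (hr i).ne')
    ((smul_set_mono hSab).trans_eq (LinearOrderedField.smul_Icc (hr i))))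

lemma le_rescaledLogMass_withDensity (i : ι) :
    ((-b : ℝ) : EReal) + rescaledLogMass r μ S i ≤ rescaledLogMass r μhat S i := by
  unfold rescaledLogMass
  rw [hFR i, ← inv_mul_log_ofReal_exp_mul (hr i), mul_neg]
  exact inv_mul_log_mono (hr i) (le_withDensity_exp_neg_apply
    (hS.const_smul_of_ne_zero (hr i).ne')
    ((smul_set_mono hSab).trans_eq (LinearOrderedField.smul_Icc (hr i))))

variable {l : Filter ι} [l.NeBot] {x y : EReal}

lemma add_le_of_limsup_rescaledLogMass_le (hμ : limsup (rescaledLogMass r μ S) l ≤ -x)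
    (hμhat : -y ≤ liminf (rescaledLogMass r μhat S) l) : x + a ≤ y := by
  have h : -y ≤ ((-a : ℝ) : EReal) + -x := calc
    -y ≤ liminf (rescaledLogMass r μhat S) l := hμhat
    _ ≤ limsup (rescaledLogMass r μhat S) l := liminf_le_limsup
    _ ≤ limsup (fun i => ((-a : ℝ) : EReal) + rescaledLogMass r μ S i) l :=
        limsup_le_limsup (.of_forall (rescaledLogMass_withDensity_le hr hFR hS hSab))
    _ ≤ ((-a : ℝ) : EReal) + limsup (rescaledLogMass r μ S) l := EReal.limsup_coe_add_le _ _
    _ ≤ ((-a : ℝ) : EReal) + -x := add_le_add le_rfl hμ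
  rwa [EReal.neg_coe_add_neg, EReal.neg_le_neg_iff] at h

lemma le_add_of_le_liminf_rescaledLogMass (hμ : -y ≤ liminf (rescaledLogMass r μ S) l)
    (hμhat : limsup (rescaledLogMass r μhat S) l ≤ -x) : x ≤ y + b := by
  have h : ((-b : ℝ) : EReal) + -y ≤ -x := calc
    _ ≤ ((-b : ℝ) : EReal) + liminf (rescaledLogMass r μ S) l := add_le_add le_rfl hμ
    _ ≤ liminf (fun i => ((-b : ℝ) : EReal) + rescaledLogMass r μ S i) l :=
        EReal.coe_add_liminf_le _ _
    _ ≤ liminf (rescaledLogMass r μhat S) l :=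
        liminf_le_liminf (.of_forall (le_rescaledLogMass_withDensity hr hFR hS hSab))
    _ ≤ limsup (rescaledLogMass r μhat S) l := liminf_le_limsup
    _ ≤ -x := hμhat
  rwa [EReal.neg_coe_add_neg, EReal.neg_le_neg_iff] at h

end Fluctuation

section Balls

variable {ι : Type*} {l : Filter ι} [l.NeBot] {r : ι → ℝ} {μ μhat : ι → Measure ℝ}
  {F G : ℝ → EReal} {x ε : ℝ}

lemma iInf_closedBall_add_le_of_rescaledLogMass (hr : ∀ i, 0 < r i)
    (hFR : ∀ i, μhat i = (μ i).withDensity (fun s => ENNReal.ofReal (Real.exp (-s))))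
    (hε : 0 < ε)
    (hμ : limsup (rescaledLogMass r μ (ball x ε)) l ≤ -⨅ t ∈ closure (ball x ε), F t)
    (hμhat : -(⨅ t ∈ interior (ball x ε), G t) ≤ liminf (rescaledLogMass r μhat (ball x ε)) l) :
    (⨅ t ∈ closedBall x ε, F t) + ((x - ε : ℝ) : EReal) ≤ G x := by
  rw [closure_ball x hε.ne'] at hμ
  rw [isOpen_ball.interior_eq] at hμhat
  exact (add_le_of_limsup_rescaledLogMass_le hr hFR measurableSet_ball
    (Real.ball_eq_Ioo x ε ▸ Ioo_subset_Icc_self) hμ hμhat).trans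
    (iInf₂_le x (mem_ball_self hε))

lemma iInf_closedBall_le_add_of_rescaledLogMass (hr : ∀ i, 0 < r i)
    (hFR : ∀ i, μhat i = (μ i).withDensity (fun s => ENNReal.ofReal (Real.exp (-s))))
    (hε : 0 < ε)
    (hμ : -(⨅ t ∈ interior (ball x ε), F t) ≤ liminf (rescaledLogMass r μ (ball x ε)) l)
    (hμhat : limsup (rescaledLogMass r μhat (ball x ε)) l ≤ -⨅ t ∈ closure (ball x ε), G t) :
    ⨅ t ∈ closedBall x ε, G t ≤ F x + ((x + ε : ℝ) : EReal) := by
  rw [isOpen_ball.interior_eq] at hμ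
  rw [closure_ball x hε.ne'] at hμhat
  exact (le_add_of_le_liminf_rescaledLogMass hr hFR measurableSet_ball
    (Real.ball_eq_Ioo x ε ▸ Ioo_subset_Icc_self) hμ hμhat).trans
    (add_le_add (iInf₂_le x (mem_ball_self hε)) le_rfl)

end Balls

lemma LowerSemicontinuous.coe_ennreal_ereal {α : Type*} [TopologicalSpace α] {f : α → ℝ≥0∞}
    (hf : LowerSemicontinuous f) : LowerSemicontinuous fun t => (f t : EReal) :=
  continuous_coe_ennreal_ereal.comp_lowerSemicontinuous hf EReal.coe_ennreal_strictMono.monotone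

theorem asymptotic_fluctuation_relation_general
    {ι : Type*} (l : Filter ι) [l.NeBot]
    (r : ι → ℝ) (hrpos : ∀ i, 0 < r i)
    (μ μhat : ι → Measure ℝ)
    (hFR : ∀ i, μhat i = (μ i).withDensity (fun s => ENNReal.ofReal (Real.exp (-s))))
    (J : Set ℝ)
    (I Ihat : ℝ → ℝ≥0∞)
    (hIlsc : LowerSemicontinuous I) (hIhatlsc : LowerSemicontinuous Ihat)
    (hLDP : ∀ S : Set ℝ, S ⊆ J → MeasurableSet S →
      (-(⨅ s ∈ interior S, (I s : EReal))
          ≤ liminf (fun i => ((r i)⁻¹ : EReal) * ENNReal.log (μ i (r i • S))) l)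
      ∧ (limsup (fun i => ((r i)⁻¹ : EReal) * ENNReal.log (μ i (r i • S))) l
          ≤ -(⨅ s ∈ closure S, (I s : EReal))))
    (hLDPhat : ∀ S : Set ℝ, S ⊆ J → MeasurableSet S →
      (-(⨅ s ∈ interior S, (Ihat s : EReal))
          ≤ liminf (fun i => ((r i)⁻¹ : EReal) * ENNReal.log (μhat i (r i • S))) l)
      ∧ (limsup (fun i => ((r i)⁻¹ : EReal) * ENNReal.log (μhat i (r i • S))) l
          ≤ -(⨅ s ∈ closure S, (Ihat s : EReal)))) :
    ∀ s ∈ interior J, (Ihat s : EReal) = (I s : EReal) + (s : EReal) := by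
  intro s hs
  have hsmall : ∀ᶠ ε in 𝓝[>] (0 : ℝ), 0 < ε ∧ ball s ε ⊆ J := by
    obtain ⟨ε₀, hε₀, hJ⟩ := nhds_basis_ball.mem_iff.1 (mem_interior_iff_mem_nhds.1 hs)
    filter_upwards [Ioo_mem_nhdsGT hε₀] with ε hε
    exact ⟨hε.1, (ball_subset_ball hε.2.le).trans hJ⟩
  have hlower : ∀ᶠ ε in 𝓝[>] (0 : ℝ),
      (⨅ t ∈ closedBall s ε, (I t : EReal)) + ((s - ε : ℝ) : EReal) ≤ Ihat s :=
    hsmall.mono fun ε ⟨hε, hεJ⟩ => iInf_closedBall_add_le_of_rescaledLogMass hrpos hFR hε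
      (hLDP _ hεJ measurableSet_ball).2 (hLDPhat _ hεJ measurableSet_ball).1
  have hupper : ∀ᶠ ε in 𝓝[>] (0 : ℝ),
      (⨅ t ∈ closedBall s ε, (Ihat t : EReal)) ≤ I s + ((s + ε : ℝ) : EReal) :=
    hsmall.mono fun ε ⟨hε, hεJ⟩ => iInf_closedBall_le_add_of_rescaledLogMass hrpos hFR hε
      (hLDP _ hεJ measurableSet_ball).1 (hLDPhat _ hεJ measurableSet_ball).2
  have hplus : Tendsto (fun ε => s + ε) (𝓝[>] (0 : ℝ)) (𝓝 s) :=
    ((continuous_const_add s).tendsto' 0 s (add_zero s)).mono_left nhdsWithin_le_nhds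
  have hminus : Tendsto (fun ε => s - ε) (𝓝[>] (0 : ℝ)) (𝓝 s) :=
    ((continuous_sub_left s).tendsto' 0 s (sub_zero s)).mono_left nhdsWithin_le_nhds
  exact le_antisymm
    (le_of_tendsto_of_tendsto (hIhatlsc.coe_ennreal_ereal.tendsto_iInf_closedBall s)
      (EReal.tendsto_add_coe tendsto_const_nhds hplus) hupper)
    (le_of_tendsto_of_tendsto (EReal.tendsto_add_coe
      (hIlsc.coe_ennreal_ereal.tendsto_iInf_closedBall s) hminus) tendsto_const_nhds hlower)

/-- **Asymptotic fluctuation relation.**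
Suppose the probability measures `μ_λ`, `μ̂_λ` on `ℝ` satisfy the detailed (transient)
fluctuation relation `μ̂_λ(ds) = e^{−s} μ_λ(ds)`, and that along the nontrivial filter `l`
of the directed index set, with scale `r_λ → +∞`, both families satisfy local large
deviation bounds on the interval `J` with lower semicontinuous rate functions `I`, `Î`
(taking values in `[0,+∞]`): for every Borel `S ⊆ J`,
`−inf_{int S} I ≤ liminf r⁻¹ log μ_λ(r_λ·S) ≤ limsup r⁻¹ log μ_λ(r_λ·S) ≤ −inf_{cl S} I`,
and likewise for `μ̂_λ`, `Î`.  Then `Î(s) = I(s) + s` for every `s` in the interior of `J`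
(the identity read in `[−∞,+∞]`). -/
theorem asymptotic_fluctuation_relation
    {ι : Type*} (l : Filter ι) [l.NeBot]
    (r : ι → ℝ) (hrpos : ∀ i, 0 < r i) (hr : Tendsto r l atTop)
    (μ μhat : ι → Measure ℝ)
    (hμprob : ∀ i, IsProbabilityMeasure (μ i))
    (hμhatprob : ∀ i, IsProbabilityMeasure (μhat i))
    (hFR : ∀ i, μhat i = (μ i).withDensity (fun s => ENNReal.ofReal (Real.exp (-s))))
    (J : Set ℝ) (hJ : J.OrdConnected)
    (I Ihat : ℝ → ℝ≥0∞)
    (hIlsc : LowerSemicontinuous I) (hIhatlsc : LowerSemicontinuous Ihat)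
    (hLDP : ∀ S : Set ℝ, S ⊆ J → MeasurableSet S →
      (-(⨅ s ∈ interior S, (I s : EReal))
          ≤ liminf (fun i => ((r i)⁻¹ : EReal) * ENNReal.log (μ i (r i • S))) l)
      ∧ (limsup (fun i => ((r i)⁻¹ : EReal) * ENNReal.log (μ i (r i • S))) l
          ≤ -(⨅ s ∈ closure S, (I s : EReal))))
    (hLDPhat : ∀ S : Set ℝ, S ⊆ J → MeasurableSet S →
      (-(⨅ s ∈ interior S, (Ihat s : EReal))
          ≤ liminf (fun i => ((r i)⁻¹ : EReal) * ENNReal.log (μhat i (r i • S))) l)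
      ∧ (limsup (fun i => ((r i)⁻¹ : EReal) * ENNReal.log (μhat i (r i • S))) l
          ≤ -(⨅ s ∈ closure S, (Ihat s : EReal)))) :
    ∀ s ∈ interior J, (Ihat s : EReal) = (I s : EReal) + (s : EReal) :=
  asymptotic_fluctuation_relation_general l r hrpos μ μhat hFR J I Ihat hIlsc hIhatlsc hLDP hLDPhat
end

section
/- Let ι be a nonempty directed index set with its associated nontrivial filter l, let r : ι → (0,∞) satisfy r_λ → +∞, and for each λ let P_λ and P̂_λ be mutually absolutely continuous probability measures on a measurable space (Ω_λ, 𝔉_λ) with entropy production σ_λ := log(dP_λ/dP̂_λ). Assume that r_λ^{−1}σ_λ converges in probability under P_λ to a constant epr ∈ ℝ, i.e., for every δ > 0, P_λ(|r_λ^{−1}σ_λ − epr| > δ) → 0 along l. Then: (a) epr ≥ 0; (b) for every γ ∈ (0,1), the minimal type-II error 𝔭_γ(P_λ,P̂_λ) := inf{ P̂_λ(Γ) : Γ ∈ 𝔉_λ, P_λ(Γᶜ) ≤ γ } satisfies lim_λ r_λ^{−1} log 𝔭_γ(P_λ,P̂_λ) = −epr; (c) the lower and upper Stein exponents coincide and equal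 −epr, where the lower Stein exponent is the infimum of liminf_λ r_λ^{−1} log P̂_λ(Γ_λ) over all families (Γ_λ)_λ of measurable sets with P_λ(Γ_λᶜ) → 0, and the upper Stein exponent is the corresponding infimum of limsup_λ r_λ^{−1} log P̂_λ(Γ_λ). -/
open MeasureTheory Filter
open scoped ENNReal

/-- The entropy production observable of a pair of measures:
`σ(x) = log (dP/dQ)(x)`. -/
noncomputable def entropyProduction {Ω : Type*} [MeasurableSpace Ω]
    (P Q : Measure Ω) (x : Ω) : ℝ :=
  Real.log ((P.rnDeriv Q x).toReal)

-- EReal helpers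
lemma st_mul_le {c t : ℝ} (hc : 0 < c) {x : EReal} (hx : x ≤ (t : EReal)) :
    (c : EReal) * x ≤ ((c * t : ℝ) : EReal) := by
  induction x using EReal.rec with
  | bot => rw [EReal.coe_mul_bot_of_pos hc]; exact bot_le
  | coe y =>
      rw [← EReal.coe_mul, EReal.coe_le_coe_iff]
      exact mul_le_mul_of_nonneg_left (EReal.coe_le_coe_iff.1 hx) hc.le
  | top => exact absurd hx (by simp)

lemma st_le_mul {c t : ℝ} (hc : 0 < c) {x : EReal} (hx : (t : EReal) ≤ x) :
    ((c * t : ℝ) : EReal) ≤ (c : EReal) * x := by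
  induction x using EReal.rec with
  | bot => exact absurd hx (by simp)
  | coe y =>
      rw [← EReal.coe_mul, EReal.coe_le_coe_iff]
      exact mul_le_mul_of_nonneg_left (EReal.coe_le_coe_iff.1 hx) hc.le
  | top => rw [EReal.coe_mul_top_of_pos hc]; exact le_top

lemma st_le_coe_of_forall {x : EReal} {c : ℝ}
    (h : ∀ δ : ℝ, 0 < δ → x ≤ ((c + δ : ℝ) : EReal)) : x ≤ (c : EReal) := by
  by_contra h'
  rcases EReal.lt_iff_exists_real_btwn.1 (not_le.1 h') with ⟨y, hcy, hyx⟩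
  have hcy' : c < y := EReal.coe_lt_coe_iff.1 hcy
  have := h (y - c) (by linarith)
  rw [show c + (y - c) = y by ring] at this
  exact absurd this (not_le.2 hyx)

lemma st_coe_le_of_forall {x : EReal} {c : ℝ}
    (h : ∀ δ : ℝ, 0 < δ → ((c - δ : ℝ) : EReal) ≤ x) : (c : EReal) ≤ x := by
  by_contra h'
  rcases EReal.lt_iff_exists_real_btwn.1 (not_le.1 h') with ⟨y, hxy, hyc⟩
  have hyc' : y < c := EReal.coe_lt_coe_iff.1 hyc
  have := h (c - y) (by linarith)
  rw [show c - (c - y) = y by ring] at this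
  exact absurd this (not_le.2 hxy)

lemma st_exists_lt {a : EReal} {c : ℝ} (h : a < (c : EReal)) :
    ∃ δ : ℝ, 0 < δ ∧ a < ((c - δ : ℝ) : EReal) := by
  rcases EReal.lt_iff_exists_real_btwn.1 h with ⟨y, hay, hyc⟩
  have hyc' : y < c := EReal.coe_lt_coe_iff.1 hyc
  refine ⟨(c - y) / 2, by linarith, lt_of_lt_of_le hay ?_⟩
  rw [EReal.coe_le_coe_iff]; linarith

lemma st_exists_gt {b : EReal} {c : ℝ} (h : (c : EReal) < b) :
    ∃ δ : ℝ, 0 < δ ∧ ((c + δ : ℝ) : EReal) < b := by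
  rcases EReal.lt_iff_exists_real_btwn.1 h with ⟨y, hcy, hyb⟩
  have hcy' : c < y := EReal.coe_lt_coe_iff.1 hcy
  refine ⟨(y - c) / 2, by linarith, lt_of_le_of_lt ?_ hyb⟩
  rw [EReal.coe_le_coe_iff]; linarith

-- change of measure bounds
lemma st_meas_upper {Ω : Type*} [MeasurableSpace Ω] (P Q : Measure Ω)
    [IsProbabilityMeasure P] [IsProbabilityMeasure Q]
    (hPQ : P ≪ Q) (hQP : Q ≪ P) (c : ℝ) {S : Set Ω} (hS : MeasurableSet S)
    (h : ∀ x ∈ S, c ≤ entropyProduction P Q x) :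
    Q S ≤ ENNReal.ofReal (Real.exp (-c)) * P S := by
  have hae : ∀ᵐ x ∂P, x ∈ S → Q.rnDeriv P x ≤ ENNReal.ofReal (Real.exp (-c)) := by
    filter_upwards [Measure.inv_rnDeriv hPQ, Measure.rnDeriv_pos hPQ,
      hPQ.ae_le (Measure.rnDeriv_lt_top P Q)] with x hinv hpos hlt hxS
    have ht : 0 < (P.rnDeriv Q x).toReal := ENNReal.toReal_pos hpos.ne' hlt.ne
    have hexp : Real.exp c ≤ (P.rnDeriv Q x).toReal := by
      have := h x hxS
      calc Real.exp c ≤ Real.exp (Real.log ((P.rnDeriv Q x).toReal)) := Real.exp_le_exp.2 this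
        _ = (P.rnDeriv Q x).toReal := Real.exp_log ht
    have h1 : ENNReal.ofReal (Real.exp c) ≤ P.rnDeriv Q x := by
      rw [← ENNReal.ofReal_toReal hlt.ne]
      exact ENNReal.ofReal_le_ofReal hexp
    calc Q.rnDeriv P x = (P.rnDeriv Q x)⁻¹ := by
          rw [← hinv]; simp
      _ ≤ (ENNReal.ofReal (Real.exp c))⁻¹ := ENNReal.inv_le_inv' h1
      _ = ENNReal.ofReal (Real.exp (-c)) := by
          rw [← ENNReal.ofReal_inv_of_pos (Real.exp_pos c), ← Real.exp_neg]
  calc Q S = ∫⁻ x in S, Q.rnDeriv P x ∂P := (Measure.setLIntegral_rnDeriv hQP S).symm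
    _ ≤ ∫⁻ _ in S, ENNReal.ofReal (Real.exp (-c)) ∂P :=
        lintegral_mono_ae ((ae_restrict_iff' hS).2 hae)
    _ = ENNReal.ofReal (Real.exp (-c)) * P S := setLIntegral_const S _

lemma st_meas_lower {Ω : Type*} [MeasurableSpace Ω] (P Q : Measure Ω)
    [IsProbabilityMeasure P] [IsProbabilityMeasure Q]
    (hPQ : P ≪ Q) (hQP : Q ≪ P) (c : ℝ) {S : Set Ω} (hS : MeasurableSet S)
    (h : ∀ x ∈ S, entropyProduction P Q x ≤ c) :
    ENNReal.ofReal (Real.exp (-c)) * P S ≤ Q S := by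
  have hae : ∀ᵐ x ∂P, x ∈ S → ENNReal.ofReal (Real.exp (-c)) ≤ Q.rnDeriv P x := by
    filter_upwards [Measure.inv_rnDeriv hPQ, Measure.rnDeriv_pos hPQ,
      hPQ.ae_le (Measure.rnDeriv_lt_top P Q)] with x hinv hpos hlt hxS
    have ht : 0 < (P.rnDeriv Q x).toReal := ENNReal.toReal_pos hpos.ne' hlt.ne
    have hexp : (P.rnDeriv Q x).toReal ≤ Real.exp c := by
      have := h x hxS
      calc (P.rnDeriv Q x).toReal = Real.exp (Real.log ((P.rnDeriv Q x).toReal)) :=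
            (Real.exp_log ht).symm
        _ ≤ Real.exp c := Real.exp_le_exp.2 this
    have h1 : P.rnDeriv Q x ≤ ENNReal.ofReal (Real.exp c) := by
      rw [← ENNReal.ofReal_toReal hlt.ne]
      exact ENNReal.ofReal_le_ofReal hexp
    calc ENNReal.ofReal (Real.exp (-c)) = (ENNReal.ofReal (Real.exp c))⁻¹ := by
          rw [← ENNReal.ofReal_inv_of_pos (Real.exp_pos c), ← Real.exp_neg]
      _ ≤ (P.rnDeriv Q x)⁻¹ := ENNReal.inv_le_inv' h1
      _ = Q.rnDeriv P x := by rw [← hinv]; simp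
  calc ENNReal.ofReal (Real.exp (-c)) * P S = ∫⁻ _ in S, ENNReal.ofReal (Real.exp (-c)) ∂P :=
        (setLIntegral_const S _).symm
    _ ≤ ∫⁻ x in S, Q.rnDeriv P x ∂P := lintegral_mono_ae ((ae_restrict_iff' hS).2 hae)
    _ = Q S := Measure.setLIntegral_rnDeriv hQP S


/-- **Stein error exponents.**
Let `r_λ → +∞` along the nontrivial filter `l` of a directed index set, and let `P_λ`,
`P̂_λ` be mutually absolutely continuous probability measures with entropy production
`σ_λ := log (dP_λ/dP̂_λ)`.  If `r_λ⁻¹ σ_λ → epr` in `P_λ`-probability for a constant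
`epr ∈ ℝ`, then: (a) `epr ≥ 0`; (b) for every `γ ∈ (0,1)` the minimal type-II error
`𝔭_γ(P_λ,P̂_λ) = inf { P̂_λ(Γ) : P_λ(Γᶜ) ≤ γ }` satisfies
`lim r_λ⁻¹ log 𝔭_γ(P_λ,P̂_λ) = −epr`; (c) the lower and upper Stein exponents
(infima of `liminf`/`limsup` of `r_λ⁻¹ log P̂_λ(Γ_λ)` over families with
`P_λ(Γ_λᶜ) → 0`) both equal `−epr`.  Logarithms and limits are taken in `[−∞,+∞]`. -/
theorem stein_exponents
    {ι : Type*} (l : Filter ι) [l.NeBot]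
    (r : ι → ℝ) (hrpos : ∀ i, 0 < r i) (hr : Tendsto r l atTop)
    (Ω : ι → Type*) [∀ i, MeasurableSpace (Ω i)]
    (P Phat : ∀ i, Measure (Ω i))
    (hPprob : ∀ i, IsProbabilityMeasure (P i))
    (hPhatprob : ∀ i, IsProbabilityMeasure (Phat i))
    (hac : ∀ i, P i ≪ Phat i) (hac' : ∀ i, Phat i ≪ P i)
    (epr : ℝ)
    (hconv : ∀ δ : ℝ, 0 < δ →
      Tendsto (fun i =>
          P i {x | δ < |(r i)⁻¹ * entropyProduction (P i) (Phat i) x - epr|}) l (nhds 0)) :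
    0 ≤ epr
    ∧ (∀ γ : ℝ, 0 < γ → γ < 1 →
        Tendsto (fun i => ((r i)⁻¹ : EReal) *
            ENNReal.log (⨅ (Γ : Set (Ω i)) (_ : MeasurableSet Γ)
              (_ : P i Γᶜ ≤ ENNReal.ofReal γ), Phat i Γ))
          l (nhds (-(epr : EReal))))
    ∧ sInf {a : EReal | ∃ Γ : ∀ i, Set (Ω i),
          (∀ i, MeasurableSet (Γ i))
          ∧ Tendsto (fun i => P i (Γ i)ᶜ) l (nhds 0)
          ∧ a = liminf (fun i => ((r i)⁻¹ : EReal) * ENNReal.log (Phat i (Γ i))) l}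
        = -(epr : EReal)
    ∧ sInf {a : EReal | ∃ Γ : ∀ i, Set (Ω i),
          (∀ i, MeasurableSet (Γ i))
          ∧ Tendsto (fun i => P i (Γ i)ᶜ) l (nhds 0)
          ∧ a = limsup (fun i => ((r i)⁻¹ : EReal) * ENNReal.log (Phat i (Γ i))) l}
        = -(epr : EReal) := by
  classical
  have hσmeas : ∀ i, Measurable (entropyProduction (P i) (Phat i)) := fun i =>
    ((Measure.measurable_rnDeriv (P i) (Phat i)).ennreal_toReal).log
  set B : ℝ → ∀ i, Set (Ω i) :=
    fun δ i => {x | |(r i)⁻¹ * entropyProduction (P i) (Phat i) x - epr| ≤ δ} with hBdef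
  have hBmeas : ∀ δ i, MeasurableSet (B δ i) := fun δ i =>
    measurableSet_le (((hσmeas i).const_mul _).sub measurable_const).abs measurable_const
  have hBtend : ∀ δ : ℝ, 0 < δ → Tendsto (fun i => P i (B δ i)ᶜ) l (nhds 0) := by
    intro δ hδ
    have heq : ∀ i, (B δ i)ᶜ
        = {x | δ < |(r i)⁻¹ * entropyProduction (P i) (Phat i) x - epr|} := by
      intro i; ext x
      simp only [hBdef, Set.mem_compl_iff, Set.mem_setOf_eq, not_le]
    simpa only [heq] using hconv δ hδ
  set A : ℝ → ∀ i, Set (Ω i) :=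
    fun δ i => {x | entropyProduction (P i) (Phat i) x ≤ r i * (epr + δ)} with hAdef
  have hAmeas : ∀ δ i, MeasurableSet (A δ i) := fun δ i =>
    measurableSet_le (hσmeas i) measurable_const
  have hBA : ∀ (δ : ℝ) (i : ι), B δ i ⊆ A δ i := by
    intro δ i x hx
    have hx' : |(r i)⁻¹ * entropyProduction (P i) (Phat i) x - epr| ≤ δ := hx
    have h1 : (r i)⁻¹ * entropyProduction (P i) (Phat i) x - epr ≤ δ := (abs_le.1 hx').2
    show entropyProduction (P i) (Phat i) x ≤ r i * (epr + δ)
    calc entropyProduction (P i) (Phat i) x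
        = r i * ((r i)⁻¹ * entropyProduction (P i) (Phat i) x) :=
          (mul_inv_cancel_left₀ (hrpos i).ne' _).symm
      _ ≤ r i * (epr + δ) := mul_le_mul_of_nonneg_left (by linarith) (hrpos i).le
  have hBupper : ∀ (δ : ℝ) (i : ι),
      Phat i (B δ i) ≤ ENNReal.ofReal (Real.exp (-(r i * (epr - δ)))) := by
    intro δ i
    haveI := hPprob i; haveI := hPhatprob i
    have hside : ∀ x ∈ B δ i, r i * (epr - δ) ≤ entropyProduction (P i) (Phat i) x := by
      intro x hx
      have hx' : |(r i)⁻¹ * entropyProduction (P i) (Phat i) x - epr| ≤ δ := hx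
      have h1 : epr - δ ≤ (r i)⁻¹ * entropyProduction (P i) (Phat i) x := by
        have := (abs_le.1 hx').1; linarith
      calc r i * (epr - δ) ≤ r i * ((r i)⁻¹ * entropyProduction (P i) (Phat i) x) :=
            mul_le_mul_of_nonneg_left h1 (hrpos i).le
        _ = entropyProduction (P i) (Phat i) x := mul_inv_cancel_left₀ (hrpos i).ne' _
    calc Phat i (B δ i) ≤ ENNReal.ofReal (Real.exp (-(r i * (epr - δ)))) * P i (B δ i) :=
          st_meas_upper (P i) (Phat i) (hac i) (hac' i) _ (hBmeas δ i) hside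
      _ ≤ ENNReal.ofReal (Real.exp (-(r i * (epr - δ)))) * 1 := mul_le_mul_right prob_le_one _
      _ = _ := mul_one _
  have hAev : ∀ δ : ℝ, 0 < δ → ∀ c : ℝ, 0 < c →
      ∀ᶠ i in l, P i (A δ i)ᶜ ≤ ENNReal.ofReal c := by
    intro δ hδ c hc
    have h0 : (0 : ℝ≥0∞) < ENNReal.ofReal c := ENNReal.ofReal_pos.2 hc
    filter_upwards [(hBtend δ hδ).eventually (eventually_lt_nhds h0)] with i hi
    exact le_trans (measure_mono (Set.compl_subset_compl.2 (hBA δ i))) hi.le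
  have hKey : ∀ γ δ : ℝ, 0 < γ → γ < 1 → 0 < δ → ∀ i : ι,
      P i (A δ i)ᶜ ≤ ENNReal.ofReal ((1 - γ) / 2) →
      ∀ Γ : Set (Ω i), MeasurableSet Γ → P i Γᶜ ≤ ENNReal.ofReal γ →
      ENNReal.ofReal ((1 - γ) / 2 * Real.exp (-(r i * (epr + δ)))) ≤ Phat i Γ := by
    intro γ δ hγ0 hγ1 hδ i hAi Γ hΓ hΓγ
    haveI := hPprob i; haveI := hPhatprob i
    have hsub : ENNReal.ofReal ((1 - γ) / 2) ≤ P i (Γ ∩ A δ i) := by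
      have h1 : P i ((Γ ∩ A δ i)ᶜ) ≤ ENNReal.ofReal (γ + (1 - γ) / 2) := by
        rw [Set.compl_inter, ENNReal.ofReal_add hγ0.le (by linarith)]
        exact le_trans (measure_union_le _ _) (add_le_add hΓγ hAi)
      have h2 : (1 : ℝ≥0∞) ≤ P i (Γ ∩ A δ i) + P i ((Γ ∩ A δ i)ᶜ) := by
        have h3 := measure_union_le (μ := P i) (Γ ∩ A δ i) (Γ ∩ A δ i)ᶜ
        rwa [Set.union_compl_self, measure_univ] at h3
      calc ENNReal.ofReal ((1 - γ) / 2) = 1 - ENNReal.ofReal (γ + (1 - γ) / 2) := by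
            rw [← ENNReal.ofReal_one, ← ENNReal.ofReal_sub _ (by linarith)]
            congr 1; ring
        _ ≤ 1 - P i ((Γ ∩ A δ i)ᶜ) := tsub_le_tsub_left h1 1
        _ ≤ P i (Γ ∩ A δ i) := tsub_le_iff_right.2 h2
    have hlow := st_meas_lower (P i) (Phat i) (hac i) (hac' i) (r i * (epr + δ))
        (hΓ.inter (hAmeas δ i)) (fun x hx => hx.2)
    calc ENNReal.ofReal ((1 - γ) / 2 * Real.exp (-(r i * (epr + δ))))
        = ENNReal.ofReal (Real.exp (-(r i * (epr + δ)))) * ENNReal.ofReal ((1 - γ) / 2) := by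
          rw [mul_comm ((1 - γ) / 2), ENNReal.ofReal_mul (Real.exp_pos _).le]
      _ ≤ ENNReal.ofReal (Real.exp (-(r i * (epr + δ)))) * P i (Γ ∩ A δ i) :=
          mul_le_mul_right hsub _
      _ ≤ Phat i (Γ ∩ A δ i) := hlow
      _ ≤ Phat i Γ := measure_mono Set.inter_subset_left
  have hupE : ∀ (δ : ℝ) (i : ι) (x : ℝ≥0∞), x ≤ Phat i (B δ i) →
      ((r i)⁻¹ : EReal) * ENNReal.log x ≤ ((-(epr - δ) : ℝ) : EReal) := by
    intro δ i x hx
    have h1 : ENNReal.log x ≤ ((-(r i * (epr - δ)) : ℝ) : EReal) := by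
      calc ENNReal.log x ≤ ENNReal.log (ENNReal.ofReal (Real.exp (-(r i * (epr - δ))))) :=
            ENNReal.log_monotone (hx.trans (hBupper δ i))
        _ = ((Real.log (Real.exp (-(r i * (epr - δ)))) : ℝ) : EReal) :=
            ENNReal.log_ofReal_of_pos (Real.exp_pos _)
        _ = _ := by rw [Real.log_exp]
    calc ((r i)⁻¹ : EReal) * ENNReal.log x
        ≤ (((r i)⁻¹ * -(r i * (epr - δ)) : ℝ) : EReal) := st_mul_le (inv_pos.2 (hrpos i)) h1
      _ = ((-(epr - δ) : ℝ) : EReal) := by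
          congr 1
          rw [mul_neg, inv_mul_cancel_left₀ (hrpos i).ne']
  have hlowE : ∀ ε : ℝ, 0 < ε → ∀ (δ : ℝ) (i : ι) (x : ℝ≥0∞),
      ENNReal.ofReal (ε * Real.exp (-(r i * (epr + δ)))) ≤ x →
      (((r i)⁻¹ * Real.log ε - (epr + δ) : ℝ) : EReal) ≤ ((r i)⁻¹ : EReal) * ENNReal.log x := by
    intro ε hε δ i x hx
    have hlogeq : Real.log (ε * Real.exp (-(r i * (epr + δ))))
        = Real.log ε - r i * (epr + δ) := by
      rw [Real.log_mul hε.ne' (Real.exp_ne_zero _), Real.log_exp]; ring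
    have h1 : ((Real.log ε - r i * (epr + δ) : ℝ) : EReal) ≤ ENNReal.log x := by
      calc ((Real.log ε - r i * (epr + δ) : ℝ) : EReal)
          = ENNReal.log (ENNReal.ofReal (ε * Real.exp (-(r i * (epr + δ))))) := by
            rw [ENNReal.log_ofReal_of_pos (by positivity), hlogeq]
        _ ≤ ENNReal.log x := ENNReal.log_monotone hx
    calc (((r i)⁻¹ * Real.log ε - (epr + δ) : ℝ) : EReal)
        = (((r i)⁻¹ * (Real.log ε - r i * (epr + δ)) : ℝ) : EReal) := by
          congr 1
          rw [mul_sub, inv_mul_cancel_left₀ (hrpos i).ne']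
      _ ≤ ((r i)⁻¹ : EReal) * ENNReal.log x := st_le_mul (inv_pos.2 (hrpos i)) h1
  have hsmall : ∀ ε : ℝ, 0 < ε → ∀ δ : ℝ, 0 < δ →
      ∀ᶠ i in l, -δ < (r i)⁻¹ * Real.log ε := by
    intro ε hε δ hδ
    have h0 : Tendsto (fun i => (r i)⁻¹ * Real.log ε) l (nhds 0) := by
      have := (tendsto_inv_atTop_zero.comp hr).mul_const (Real.log ε)
      simpa using this
    exact h0.eventually (eventually_gt_nhds (by linarith))
  -- part (a)
  have hepr : 0 ≤ epr := by
    by_contra hneg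
    push_neg at hneg
    have hδ : 0 < -epr / 2 := by linarith
    have h1 : ∀ᶠ i in l,
        ENNReal.ofReal ((1 - (1/2 : ℝ)) / 2 * Real.exp (-(r i * (epr + -epr / 2))))
          ≤ Phat i Set.univ := by
      filter_upwards [hAev (-epr / 2) hδ ((1 - (1/2 : ℝ)) / 2) (by norm_num)] with i hi
      exact hKey (1/2) (-epr / 2) (by norm_num) (by norm_num) hδ i hi Set.univ
        MeasurableSet.univ (by simp)
    have h2 : Tendsto (fun i => (1 - (1/2 : ℝ)) / 2 * Real.exp (-(r i * (epr + -epr / 2))))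
        l atTop := by
      apply Tendsto.const_mul_atTop (by norm_num : (0:ℝ) < (1 - (1/2 : ℝ)) / 2)
      apply Real.tendsto_exp_atTop.comp
      have h3 : Tendsto (fun i => r i * -(epr + -epr / 2)) l atTop :=
        hr.atTop_mul_const (by linarith)
      have h4 : (fun i => -(r i * (epr + -epr / 2))) = fun i => r i * -(epr + -epr / 2) := by
        funext i; ring
      rw [h4]
      exact h3
    obtain ⟨i, hi2, hi1⟩ := ((h2.eventually_ge_atTop 2).and h1).exists
    haveI := hPhatprob i
    rw [measure_univ] at hi1
    have hcon : (2 : ℝ≥0∞) ≤ 1 := by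
      calc (2 : ℝ≥0∞) = ENNReal.ofReal 2 := by norm_num
        _ ≤ ENNReal.ofReal _ := ENNReal.ofReal_le_ofReal hi2
        _ ≤ 1 := hi1
    norm_num at hcon
  -- liminf lower bound, used twice in part (c)
  have hliminf_ge : ∀ Γ : ∀ i, Set (Ω i), (∀ i, MeasurableSet (Γ i)) →
      Tendsto (fun i => P i (Γ i)ᶜ) l (nhds 0) →
      ((-epr : ℝ) : EReal)
        ≤ liminf (fun i => ((r i)⁻¹ : EReal) * ENNReal.log (Phat i (Γ i))) l := by
    intro Γ hΓmeas hΓtend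
    apply st_coe_le_of_forall
    intro δ hδ
    refine le_liminf_of_le (by isBoundedDefault) ?_
    have hΓev : ∀ᶠ i in l, P i (Γ i)ᶜ ≤ ENNReal.ofReal (1/2) :=
      (hΓtend.eventually (eventually_lt_nhds (ENNReal.ofReal_pos.2 (by norm_num)))).mono
        fun i h => h.le
    filter_upwards [hΓev, hAev (δ/3) (by linarith) ((1 - (1/2 : ℝ)) / 2) (by norm_num),
      hsmall ((1 - (1/2 : ℝ)) / 2) (by norm_num) (δ/3) (by linarith)] with i h1 h2 h3
    have hp := hKey (1/2) (δ/3) (by norm_num) (by norm_num) (by linarith) i h2 (Γ i)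
      (hΓmeas i) h1
    refine le_trans ?_ (hlowE ((1 - (1/2 : ℝ)) / 2) (by norm_num) (δ/3) i _ hp)
    rw [EReal.coe_le_coe_iff]
    linarith
  refine ⟨hepr, ?_, ?_, ?_⟩
  · -- part (b)
    intro γ hγ0 hγ1
    rw [show -(epr : EReal) = ((-epr : ℝ) : EReal) by norm_cast]
    refine tendsto_order.2 ⟨?_, ?_⟩
    · intro a ha
      obtain ⟨δ, hδ, haδ⟩ := st_exists_lt ha
      have hε : 0 < (1 - γ) / 2 := by linarith
      filter_upwards [hAev (δ/3) (by linarith) ((1 - γ) / 2) hε,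
        hsmall ((1 - γ) / 2) hε (δ/3) (by linarith)] with i hA hsm
      have hp : ENNReal.ofReal ((1 - γ) / 2 * Real.exp (-(r i * (epr + δ/3)))) ≤
          ⨅ (Γ : Set (Ω i)) (_ : MeasurableSet Γ) (_ : P i Γᶜ ≤ ENNReal.ofReal γ), Phat i Γ :=
        le_iInf fun Γ => le_iInf fun hΓ => le_iInf fun hγc =>
          hKey γ (δ/3) hγ0 hγ1 (by linarith) i hA Γ hΓ hγc
      refine lt_of_lt_of_le (lt_of_lt_of_le haδ ?_) (hlowE ((1 - γ) / 2) hε (δ/3) i _ hp)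
      rw [EReal.coe_le_coe_iff]
      linarith
    · intro b hb
      obtain ⟨δ, hδ, hbδ⟩ := st_exists_gt hb
      have h0 : (0 : ℝ≥0∞) < ENNReal.ofReal γ := ENNReal.ofReal_pos.2 hγ0
      filter_upwards [(hBtend δ hδ).eventually (eventually_lt_nhds h0)] with i hi
      have hple : (⨅ (Γ : Set (Ω i)) (_ : MeasurableSet Γ)
          (_ : P i Γᶜ ≤ ENNReal.ofReal γ), Phat i Γ) ≤ Phat i (B δ i) :=
        iInf_le_of_le (B δ i) (iInf_le_of_le (hBmeas δ i) (iInf_le_of_le hi.le le_rfl))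
      refine lt_of_le_of_lt (hupE δ i _ hple) (lt_of_le_of_lt ?_ hbδ)
      rw [EReal.coe_le_coe_iff]
      linarith
  · -- part (c), liminf
    apply le_antisymm
    · rw [show -(epr : EReal) = ((-epr : ℝ) : EReal) by norm_cast]
      apply st_le_coe_of_forall
      intro δ hδ
      refine le_trans (sInf_le ⟨fun i => B δ i, fun i => hBmeas δ i, hBtend δ hδ, rfl⟩) ?_
      have hub : liminf (fun i => ((r i)⁻¹ : EReal) * ENNReal.log (Phat i (B δ i))) l
          ≤ ((-(epr - δ) : ℝ) : EReal) :=
        le_trans liminf_le_limsup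
          (limsup_le_of_le (by isBoundedDefault)
            (Eventually.of_forall fun i => hupE δ i _ le_rfl))
      refine le_trans hub ?_
      rw [EReal.coe_le_coe_iff]
      linarith
    · apply le_sInf
      rintro a ⟨Γ, hΓmeas, hΓtend, rfl⟩
      rw [show -(epr : EReal) = ((-epr : ℝ) : EReal) by norm_cast]
      exact hliminf_ge Γ hΓmeas hΓtend
  · -- part (c), limsup
    apply le_antisymm
    · rw [show -(epr : EReal) = ((-epr : ℝ) : EReal) by norm_cast]
      apply st_le_coe_of_forall
      intro δ hδ
      refine le_trans (sInf_le ⟨fun i => B δ i, fun i => hBmeas δ i, hBtend δ hδ, rfl⟩) ?_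
      have hub : limsup (fun i => ((r i)⁻¹ : EReal) * ENNReal.log (Phat i (B δ i))) l
          ≤ ((-(epr - δ) : ℝ) : EReal) :=
        limsup_le_of_le (by isBoundedDefault)
          (Eventually.of_forall fun i => hupE δ i _ le_rfl)
      refine le_trans hub ?_
      rw [EReal.coe_le_coe_iff]
      linarith
    · apply le_sInf
      rintro a ⟨Γ, hΓmeas, hΓtend, rfl⟩
      rw [show -(epr : EReal) = ((-epr : ℝ) : EReal) by norm_cast]
      exact le_trans (hliminf_ge Γ hΓmeas hΓtend) liminf_le_limsup
end

section
/- Let ι be a nonempty directed index set with filter l, let r : ι → (0,∞) satisfy r_λ → +∞, and for each λ let P_λ and P̂_λ be mutually absolutely continuous probability measures with entropy production σ_λ := log(dP_λ/dP̂_λ). Let I : ℝ → [0,+∞] satisfy the large-deviation lower bound liminf_λ r_λ^{−1} log P_λ(r_λ^{−1}σ_λ ∈ U) ≥ −inf_{s∈U} I(s) for every open set U ⊆ ℝ, and set ē(α) := limsup_λ r_λ^{−1} log ∫ e^{−ασ_λ} dP_λ. Then the lower and upper Chernoff exponents c̲ := liminf_λ r_λ^{−1} log(1 − ‖P_λ −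 P̂_λ‖_var) and c̄ := limsup_λ r_λ^{−1} log(1 − ‖P_λ − P̂_λ‖_var) satisfy −I(0) ≤ c̲ ≤ c̄ ≤ inf_{α∈[0,1]} ē(α). -/
/-!
Write `σ = log (dP/dQ)`, so that `dQ = e^{-σ} dP`. Testing the total variation distance on
`Γ = {σ ≥ 0}` gives `1 - ‖P - Q‖_var ≤ ∫ min (1, e^{-σ}) dP ≤ ∫ e^{-ασ} dP` for `α ∈ [0, 1]`,
which yields the upper bound on `c̄`. Conversely, on `A = {σ < r ε}` the density `e^{-σ}` is at
least `e^{-rε}`, so for every measurable `Γ` one has `P(Γᶜ) + Q(Γ) ≥ e^{-rε} P(A)`; hence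
`1 - ‖P - Q‖_var ≥ e^{-rε} P(r⁻¹σ < ε)`, and the large-deviation lower bound for the open set
`(-∞, ε)` gives `c̲ ≥ -I(0) - ε` for every `ε > 0`.
-/

open MeasureTheory Filter
open scoped ENNReal

/-- The total variation distance `‖P − Q‖_var = sup_Γ (P(Γ) − Q(Γ))`,
the supremum running over measurable sets. -/
noncomputable def tvDist {Ω : Type*} [MeasurableSpace Ω] (P Q : Measure Ω) : ℝ≥0∞ :=
  ⨆ (Γ : Set Ω) (_ : MeasurableSet Γ), (P Γ - Q Γ)

open Set

section EntropyProduction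

variable {Ω : Type*} [MeasurableSpace Ω] {P Q : Measure Ω}

lemma measurable_entropyProduction (P Q : Measure Ω) :
    Measurable (entropyProduction P Q) :=
  (Measure.measurable_rnDeriv P Q).ennreal_toReal.log

lemma rnDeriv_eq_exp_neg_entropyProduction [SigmaFinite P] [SigmaFinite Q] (hPQ : P ≪ Q) :
    ∀ᵐ x ∂P, Q.rnDeriv P x = ENNReal.ofReal (Real.exp (-entropyProduction P Q x)) := by
  filter_upwards [Measure.rnDeriv_pos hPQ, hPQ.ae_le (Measure.rnDeriv_ne_top P Q),
    Measure.inv_rnDeriv hPQ] with x hpos hne hinv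
  have hreal : 0 < (P.rnDeriv Q x).toReal := ENNReal.toReal_pos hpos.ne' hne
  rw [← hinv, Pi.inv_apply, entropyProduction, Real.exp_neg, Real.exp_log hreal,
    ENNReal.ofReal_inv_of_pos hreal, ENNReal.ofReal_toReal hne]

lemma measure_eq_setLIntegral_exp_neg_entropyProduction [SigmaFinite P] [SigmaFinite Q]
    (hPQ : P ≪ Q) (hQP : Q ≪ P) (s : Set Ω) :
    Q s = ∫⁻ x in s, ENNReal.ofReal (Real.exp (-entropyProduction P Q x)) ∂P := by
  rw [← Measure.setLIntegral_rnDeriv hQP s]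
  exact lintegral_congr_ae (ae_restrict_of_ae (rnDeriv_eq_exp_neg_entropyProduction hPQ))

end EntropyProduction

section TotalVariation

variable {Ω : Type*} [MeasurableSpace Ω] {P Q : Measure Ω} [IsProbabilityMeasure P]

lemma one_sub_tvDist_le_measure_compl_add {Γ : Set Ω} (hΓ : MeasurableSet Γ) :
    1 - tvDist P Q ≤ P Γᶜ + Q Γ := by
  have hΓtv : P Γ - Q Γ ≤ tvDist P Q :=
    le_iSup₂ (f := fun Γ (_ : MeasurableSet Γ) => P Γ - Q Γ) Γ hΓ
  calc 1 - tvDist P Q ≤ 1 - (P Γ - Q Γ) := tsub_le_tsub_left hΓtv 1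
    _ ≤ P Γᶜ + Q Γ := by
      rw [tsub_le_iff_right, ← prob_add_prob_compl (μ := P) hΓ, add_comm (P Γ), add_assoc]
      gcongr
      exact le_add_tsub

lemma le_one_sub_tvDist_of_forall_le {a : ℝ≥0∞}
    (h : ∀ Γ, MeasurableSet Γ → a ≤ P Γᶜ + Q Γ) : a ≤ 1 - tvDist P Q := by
  have ha : a ≤ 1 := by simpa using h ∅ MeasurableSet.empty
  have htv : tvDist P Q ≤ 1 - a := by
    refine iSup₂_le fun Γ hΓ => ?_
    calc P Γ - Q Γ = (P Γᶜ + P Γ) - (P Γᶜ + Q Γ) :=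
          (ENNReal.add_sub_add_eq_sub_left (measure_ne_top P _)).symm
      _ = 1 - (P Γᶜ + Q Γ) := by rw [add_comm, prob_add_prob_compl hΓ]
      _ ≤ 1 - a := tsub_le_tsub_left (h Γ hΓ) 1
  calc a = 1 - (1 - a) := (ENNReal.sub_sub_cancel ENNReal.one_ne_top ha).symm
    _ ≤ 1 - tvDist P Q := tsub_le_tsub_left htv 1

variable [IsProbabilityMeasure Q]

lemma one_sub_tvDist_le_lintegral_min (hPQ : P ≪ Q) (hQP : Q ≪ P) :
    1 - tvDist P Q
      ≤ ∫⁻ x, ENNReal.ofReal (min 1 (Real.exp (-entropyProduction P Q x))) ∂P := by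
  set σ := entropyProduction P Q
  set Γ : Set Ω := {x | 0 ≤ σ x}
  have hΓ : MeasurableSet Γ := measurableSet_le measurable_const (measurable_entropyProduction P Q)
  calc 1 - tvDist P Q ≤ P Γᶜ + Q Γ := one_sub_tvDist_le_measure_compl_add hΓ
    _ = ∫⁻ x in Γᶜ, ENNReal.ofReal (min 1 (Real.exp (-σ x))) ∂P
          + ∫⁻ x in Γ, ENNReal.ofReal (min 1 (Real.exp (-σ x))) ∂P := by
      rw [measure_eq_setLIntegral_exp_neg_entropyProduction hPQ hQP, ← setLIntegral_one]
      congr 1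
      · refine setLIntegral_congr_fun hΓ.compl fun x hx => ?_
        have hσ : σ x < 0 := not_le.1 hx
        rw [min_eq_left (Real.one_le_exp (by linarith)), ENNReal.ofReal_one]
      · refine setLIntegral_congr_fun hΓ fun x (hx : 0 ≤ σ x) => ?_
        rw [min_eq_right (Real.exp_le_one_iff.2 (by linarith))]
    _ = ∫⁻ x, ENNReal.ofReal (min 1 (Real.exp (-σ x))) ∂P := by
      rw [add_comm, lintegral_add_compl _ hΓ]

lemma min_one_exp_neg_le_exp_neg_mul {α : ℝ} (hα₀ : 0 ≤ α) (hα₁ : α ≤ 1) (s : ℝ) :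
    min 1 (Real.exp (-s)) ≤ Real.exp (-α * s) := by
  rcases le_total 0 s with hs | hs
  · exact min_le_of_right_le (Real.exp_le_exp.2 (by nlinarith))
  · exact min_le_of_left_le (Real.one_le_exp (by nlinarith))

lemma one_sub_tvDist_le_lintegral_exp_neg_mul (hPQ : P ≪ Q) (hQP : Q ≪ P)
    {α : ℝ} (hα₀ : 0 ≤ α) (hα₁ : α ≤ 1) :
    1 - tvDist P Q ≤ ∫⁻ x, ENNReal.ofReal (Real.exp (-α * entropyProduction P Q x)) ∂P :=
  (one_sub_tvDist_le_lintegral_min hPQ hQP).trans <| lintegral_mono fun _ =>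
    ENNReal.ofReal_le_ofReal (min_one_exp_neg_le_exp_neg_mul hα₀ hα₁ _)

lemma ofReal_exp_neg_mul_measure_le_one_sub_tvDist (hPQ : P ≪ Q) (hQP : Q ≪ P)
    {c : ℝ} (hc : 0 ≤ c) {A : Set Ω} (hA : ∀ x ∈ A, entropyProduction P Q x ≤ c) :
    ENNReal.ofReal (Real.exp (-c)) * P A ≤ 1 - tvDist P Q := by
  set m := ENNReal.ofReal (Real.exp (-c))
  have hm : m ≤ 1 := ENNReal.ofReal_le_one.2 (Real.exp_le_one_iff.2 (by linarith))
  refine le_one_sub_tvDist_of_forall_le fun Γ hΓ => ?_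
  have hQ : m * P (A ∩ Γ) ≤ Q (A ∩ Γ) := by
    rw [measure_eq_setLIntegral_exp_neg_entropyProduction hPQ hQP, ← setLIntegral_const]
    refine setLIntegral_mono (measurable_entropyProduction P Q).neg.exp.ennreal_ofReal
      fun x hx => ?_
    exact ENNReal.ofReal_le_ofReal (Real.exp_le_exp.2 (neg_le_neg (hA x hx.1)))
  have hP : m * P (A \ Γ) ≤ P Γᶜ :=
    (mul_le_of_le_one_left zero_le hm).trans (measure_mono (sdiff_subset_compl A Γ))
  calc m * P A = m * P (A ∩ Γ) + m * P (A \ Γ) := by rw [← mul_add, measure_inter_add_sdiff A hΓ]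
    _ ≤ Q (A ∩ Γ) + P Γᶜ := add_le_add hQ hP
    _ ≤ P Γᶜ + Q Γ := by rw [add_comm]; gcongr; exact inter_subset_right

end TotalVariation

noncomputable def scaledLog (r : ℝ) (p : ℝ≥0∞) : EReal :=
  (r : EReal)⁻¹ * ENNReal.log p

lemma scaledLog_mono {r : ℝ} (hr : 0 ≤ r) : Monotone (scaledLog r) := fun _ _ h =>
  mul_le_mul_of_nonneg_left (ENNReal.log_monotone h)
    (EReal.inv_nonneg_of_nonneg (EReal.coe_nonneg.2 hr))

lemma scaledLog_ofReal_exp_neg_mul_mul {r : ℝ} (hr : 0 < r) (c : ℝ) (p : ℝ≥0∞) :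
    scaledLog r (ENNReal.ofReal (Real.exp (-(r * c))) * p) = -(c : EReal) + scaledLog r p := by
  have hinv : 0 ≤ (r : EReal)⁻¹ := EReal.inv_nonneg_of_nonneg (EReal.coe_nonneg.2 hr.le)
  rw [scaledLog, scaledLog, ENNReal.log_mul_add, ENNReal.log_ofReal_of_pos (Real.exp_pos _),
    Real.log_exp, EReal.left_distrib_of_nonneg_of_ne_top hinv (by simp [← EReal.coe_inv]),
    ← EReal.coe_inv, ← EReal.coe_mul, ← EReal.coe_neg]
  congr 2
  field_simp

lemma EReal.le_of_forall_pos_neg_add_le {x y : EReal}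
    (h : ∀ ε : ℝ, 0 < ε → -(ε : EReal) + x ≤ y) : x ≤ y := by
  refine EReal.ge_of_forall_gt_iff_ge.1 fun z hz => ?_
  obtain ⟨w, hzw, hwx⟩ := EReal.lt_iff_exists_real_btwn.1 hz
  have hzw' : z < w := EReal.coe_lt_coe_iff.1 hzw
  calc (z : EReal) = -((w - z : ℝ) : EReal) + w := by norm_cast; ring
    _ ≤ -((w - z : ℝ) : EReal) + x := by gcongr
    _ ≤ y := h _ (by linarith)

lemma neg_add_scaledLog_measure_le_scaledLog_one_sub_tvDist {Ω : Type*} [MeasurableSpace Ω]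
    {P Q : Measure Ω} [IsProbabilityMeasure P] [IsProbabilityMeasure Q]
    (hPQ : P ≪ Q) (hQP : Q ≪ P) {r ε : ℝ} (hr : 0 < r) (hε : 0 ≤ ε) :
    -(ε : EReal) + scaledLog r (P {x | r⁻¹ * entropyProduction P Q x ∈ Iio ε})
      ≤ scaledLog r (1 - tvDist P Q) := by
  rw [← scaledLog_ofReal_exp_neg_mul_mul hr]
  refine scaledLog_mono hr.le
    (ofReal_exp_neg_mul_measure_le_one_sub_tvDist hPQ hQP (mul_nonneg hr.le hε) fun x hx => ?_)
  exact ((inv_mul_lt_iff₀ hr).1 hx).le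

theorem chernoff_exponent_bounds_general
    {ι : Type*} (l : Filter ι) [l.NeBot]
    (r : ι → ℝ) (hrpos : ∀ i, 0 < r i)
    (Ω : ι → Type*) [∀ i, MeasurableSpace (Ω i)]
    (P Phat : ∀ i, Measure (Ω i))
    (hPprob : ∀ i, IsProbabilityMeasure (P i))
    (hPhatprob : ∀ i, IsProbabilityMeasure (Phat i))
    (hac : ∀ i, P i ≪ Phat i) (hac' : ∀ i, Phat i ≪ P i)
    (I : ℝ → ℝ≥0∞)
    (hLDPlower : ∀ U : Set ℝ, IsOpen U →
      -(⨅ s ∈ U, (I s : EReal))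
        ≤ liminf (fun i => ((r i)⁻¹ : EReal) *
            ENNReal.log (P i {x | (r i)⁻¹ * entropyProduction (P i) (Phat i) x ∈ U})) l)
    (ebar : ℝ → EReal)
    (hebar : ∀ α : ℝ, ebar α = limsup (fun i => ((r i)⁻¹ : EReal) *
        ENNReal.log (∫⁻ x, ENNReal.ofReal
          (Real.exp (-α * entropyProduction (P i) (Phat i) x)) ∂(P i))) l)
    (clow cup : EReal)
    (hclow : clow = liminf (fun i => ((r i)⁻¹ : EReal) *
        ENNReal.log (1 - tvDist (P i) (Phat i))) l)
    (hcup : cup = limsup (fun i => ((r i)⁻¹ : EReal) *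
        ENNReal.log (1 - tvDist (P i) (Phat i))) l) :
    -(I 0 : EReal) ≤ clow ∧ clow ≤ cup ∧ cup ≤ ⨅ α ∈ Set.Icc (0 : ℝ) 1, ebar α := by
  have := hPprob; have := hPhatprob
  refine ⟨?_, ?_, ?_⟩
  · rw [hclow]
    refine EReal.le_of_forall_pos_neg_add_le fun ε hε => ?_
    have hLD : -(I 0 : EReal) ≤ liminf (fun i => scaledLog (r i)
        (P i {x | (r i)⁻¹ * entropyProduction (P i) (Phat i) x ∈ Iio ε})) l :=
      (EReal.neg_le_neg_iff.2 (iInf₂_le 0 hε)).trans (hLDPlower _ isOpen_Iio)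
    calc -(ε : EReal) + -(I 0 : EReal)
        ≤ liminf (fun _ => -(ε : EReal)) l + liminf (fun i => scaledLog (r i)
            (P i {x | (r i)⁻¹ * entropyProduction (P i) (Phat i) x ∈ Iio ε})) l := by
          rw [liminf_const]; gcongr
      _ ≤ _ := EReal.le_liminf_add
      _ ≤ _ := liminf_le_liminf (Eventually.of_forall fun i =>
          neg_add_scaledLog_measure_le_scaledLog_one_sub_tvDist (hac i) (hac' i) (hrpos i) hε.le)
  · rw [hclow, hcup]
    exact liminf_le_limsup
  · rw [hcup]
    refine le_iInf₂ fun α hα => ?_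
    rw [hebar α]
    exact limsup_le_limsup (Eventually.of_forall fun i => scaledLog_mono (hrpos i).le
      (one_sub_tvDist_le_lintegral_exp_neg_mul (hac i) (hac' i) hα.1 hα.2))

/-- **Bounds on the Chernoff error exponents.**
Under a large-deviation lower bound with rate `I : ℝ → [0,+∞]` for the laws of
`r_λ⁻¹σ_λ` under `P_λ`, with `ē(α) := limsup r_λ⁻¹ log ∫ e^{−ασ_λ} dP_λ`, the lower and
upper Chernoff exponents `c̲ = liminf r_λ⁻¹ log (1 − ‖P_λ−P̂_λ‖_var)` and
`c̄ = limsup r_λ⁻¹ log (1 − ‖P_λ−P̂_λ‖_var)` satisfy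
`−I(0) ≤ c̲ ≤ c̄ ≤ inf_{α∈[0,1]} ē(α)` in `[−∞,+∞]`. -/
theorem chernoff_exponent_bounds
    {ι : Type*} (l : Filter ι) [l.NeBot]
    (r : ι → ℝ) (hrpos : ∀ i, 0 < r i) (hr : Tendsto r l atTop)
    (Ω : ι → Type*) [∀ i, MeasurableSpace (Ω i)]
    (P Phat : ∀ i, Measure (Ω i))
    (hPprob : ∀ i, IsProbabilityMeasure (P i))
    (hPhatprob : ∀ i, IsProbabilityMeasure (Phat i))
    (hac : ∀ i, P i ≪ Phat i) (hac' : ∀ i, Phat i ≪ P i)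
    (I : ℝ → ℝ≥0∞)
    (hLDPlower : ∀ U : Set ℝ, IsOpen U →
      -(⨅ s ∈ U, (I s : EReal))
        ≤ liminf (fun i => ((r i)⁻¹ : EReal) *
            ENNReal.log (P i {x | (r i)⁻¹ * entropyProduction (P i) (Phat i) x ∈ U})) l)
    (ebar : ℝ → EReal)
    (hebar : ∀ α : ℝ, ebar α = limsup (fun i => ((r i)⁻¹ : EReal) *
        ENNReal.log (∫⁻ x, ENNReal.ofReal
          (Real.exp (-α * entropyProduction (P i) (Phat i) x)) ∂(P i))) l)
    (clow cup : EReal)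
    (hclow : clow = liminf (fun i => ((r i)⁻¹ : EReal) *
        ENNReal.log (1 - tvDist (P i) (Phat i))) l)
    (hcup : cup = limsup (fun i => ((r i)⁻¹ : EReal) *
        ENNReal.log (1 - tvDist (P i) (Phat i))) l) :
    -(I 0 : EReal) ≤ clow ∧ clow ≤ cup ∧ cup ≤ ⨅ α ∈ Set.Icc (0 : ℝ) 1, ebar α :=
  chernoff_exponent_bounds_general l r hrpos Ω P Phat hPprob hPhatprob hac hac' I hLDPlower ebar
    hebar clow cup hclow hcup
end

section
/- Let I : ℝ → [0,+∞] be lower semicontinuous and let İ denote its convex hull, İ(s) := sup{ φ(s) : φ : ℝ → (−∞,+∞] convex with φ ≤ I pointwise }. Then the convex hull of the zero set I^{-1}({0}) is contained in İ^{-1}({0}); and if İ^{-1}({0}) = [a,b] for some real numbers a ≤ b (i.e., the zero set of İ is a nonempty compact interval), then I(a) = 0 and I(b) = 0, so that the convex hull of I^{-1}({0}) equals İ^{-1}({0}). -/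
/-!
The zero set of the envelope is convex because a convex minorant that is `≤ 0` at two points is
`≤ 0` between them. For the endpoints, suppose `I a > 0` at the left end `a`. Lower
semicontinuity keeps `I` above some `c > 0` on `[a - δ, a + δ]`; the envelope is positive at
`a - δ`, so some convex minorant is `≥ m > 0` there while `≤ 0` at `a`, and convexity makes it,
hence `I`, grow at least like `m (a - t) / δ` left of `a - δ`. Together these leave room for a
decreasing affine minorant of `I` that is positive at `a`, contradicting that the envelope
vanishes at `a`. The right end follows by reflecting `t ↦ -t`.
-/

open scoped ENNReal

structure IsConvexMinorant (I : ℝ → ℝ≥0∞) (φ : ℝ → EReal) : Prop where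
  ne_bot : ∀ t, φ t ≠ ⊥
  convex : ∀ x y p q : ℝ, 0 ≤ p → 0 ≤ q → p + q = 1 →
    φ (p * x + q * y) ≤ (p : EReal) * φ x + (q : EReal) * φ y
  le : ∀ t, φ t ≤ (I t : EReal)

noncomputable def convexEnvelope (I : ℝ → ℝ≥0∞) (s : ℝ) : EReal :=
  ⨆ (φ : ℝ → EReal) (_ : IsConvexMinorant I φ), φ s

namespace IsConvexMinorant

variable {I : ℝ → ℝ≥0∞} {φ : ℝ → EReal}

lemma affine {α β : ℝ} (h : ∀ t, ((α * t + β : ℝ) : EReal) ≤ I t) :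
    IsConvexMinorant I fun t => ((α * t + β : ℝ) : EReal) where
  ne_bot _ := EReal.coe_ne_bot _
  convex x y p q _ _ hpq := by
    rw [← EReal.coe_mul, ← EReal.coe_mul, ← EReal.coe_add, EReal.coe_le_coe_iff]
    exact le_of_eq (by linear_combination (-β) * hpq)
  le := h

lemma zero (I : ℝ → ℝ≥0∞) : IsConvexMinorant I fun _ => 0 where
  ne_bot _ := EReal.zero_ne_bot
  convex _ _ _ _ _ _ _ := by simp
  le t := EReal.coe_ennreal_nonneg (I t)

lemma le_convexEnvelope (hφ : IsConvexMinorant I φ) (s : ℝ) : φ s ≤ convexEnvelope I s :=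
  le_iSup₂ (f := fun ψ (_ : IsConvexMinorant I ψ) => ψ s) φ hφ

lemma comp_neg (hφ : IsConvexMinorant I φ) :
    IsConvexMinorant (fun t => I (-t)) fun t => φ (-t) where
  ne_bot t := hφ.ne_bot (-t)
  convex x y p q hp hq hpq := by
    simpa only [neg_add, mul_neg] using hφ.convex (-x) (-y) p q hp hq hpq
  le t := hφ.le (-t)

lemma apply_nonpos_of_nonpos (hφ : IsConvexMinorant I φ) {x y p q : ℝ} (hp : 0 ≤ p) (hq : 0 ≤ q)
    (hpq : p + q = 1) (hx : φ x ≤ 0) (hy : φ y ≤ 0) : φ (p * x + q * y) ≤ 0 :=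
  (hφ.convex x y p q hp hq hpq).trans <| add_nonpos
    (mul_nonpos_of_nonneg_of_nonpos (EReal.coe_nonneg.2 hp) hx)
    (mul_nonpos_of_nonneg_of_nonpos (EReal.coe_nonneg.2 hq) hy)

lemma le_apply_of_apply_nonpos (hφ : IsConvexMinorant I φ) {a x t m : ℝ} (hxa : x < a)
    (htx : t ≤ x) (hm : (m : EReal) ≤ φ x) (ha : φ a ≤ 0) :
    ((m * ((a - t) / (a - x)) : ℝ) : EReal) ≤ φ t := by
  have hat : 0 < a - t := by linarith
  set p := (a - x) / (a - t)
  have hp : 0 < p := div_pos (by linarith) hat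
  have hp1 : 0 ≤ 1 - p := by rw [sub_nonneg, div_le_one hat]; linarith
  have hx : p * t + (1 - p) * a = x := by simp only [p]; field_simp; ring
  have hmp : (m : EReal) ≤ p * φ t := calc
    (m : EReal) ≤ φ x := hm
    _ ≤ p * φ t + (1 - p : ℝ) * φ a := hx ▸ hφ.convex t a p (1 - p) hp.le hp1 (by ring)
    _ ≤ p * φ t := add_le_of_nonpos_right <|
        mul_nonpos_of_nonneg_of_nonpos (EReal.coe_nonneg.2 hp1) ha
  have hmp' : m * ((a - t) / (a - x)) = m / p := by simp only [p, div_div_eq_mul_div, mul_div_assoc]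
  rwa [hmp', EReal.coe_div, EReal.div_le_iff_le_mul (EReal.coe_pos.2 hp) (EReal.coe_ne_top p)]

end IsConvexMinorant

section convexEnvelope

variable {I : ℝ → ℝ≥0∞}

lemma sSup_convexMinorant_values_eq_convexEnvelope (I : ℝ → ℝ≥0∞) (s : ℝ) :
    sSup {a : EReal | ∃ φ : ℝ → EReal,
        (∀ t : ℝ, φ t ≠ ⊥)
        ∧ (∀ x y p q : ℝ, 0 ≤ p → 0 ≤ q → p + q = 1 →
            φ (p * x + q * y) ≤ (p : EReal) * φ x + (q : EReal) * φ y)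
        ∧ (∀ t : ℝ, φ t ≤ (I t : EReal))
        ∧ a = φ s} = convexEnvelope I s := by
  refine le_antisymm (sSup_le ?_) (iSup₂_le fun φ hφ => le_sSup ⟨φ, hφ.1, hφ.2, hφ.3, rfl⟩)
  rintro _ ⟨φ, hbot, hconv, hle, rfl⟩
  exact IsConvexMinorant.le_convexEnvelope ⟨hbot, hconv, hle⟩ s

lemma lt_convexEnvelope_iff {x : EReal} {s : ℝ} :
    x < convexEnvelope I s ↔ ∃ φ, IsConvexMinorant I φ ∧ x < φ s := by
  simp only [convexEnvelope, lt_iSup_iff, exists_prop]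

lemma convexEnvelope_nonneg (s : ℝ) : 0 ≤ convexEnvelope I s :=
  (IsConvexMinorant.zero I).le_convexEnvelope s

lemma convexEnvelope_le (s : ℝ) : convexEnvelope I s ≤ I s :=
  iSup₂_le fun _ hφ => hφ.le s

lemma convexEnvelope_comp_neg (s : ℝ) :
    convexEnvelope (fun t => I (-t)) s = convexEnvelope I (-s) := by
  refine le_antisymm (iSup₂_le fun φ hφ => ?_) (iSup₂_le fun φ hφ => ?_)
  · simpa using hφ.comp_neg.le_convexEnvelope (-s)
  · exact hφ.comp_neg.le_convexEnvelope s

lemma convex_setOf_convexEnvelope_eq_zero (I : ℝ → ℝ≥0∞) :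
    Convex ℝ {s | convexEnvelope I s = 0} := by
  intro x hx y hy p q hp hq hpq
  refine le_antisymm (iSup₂_le fun φ hφ => ?_) (convexEnvelope_nonneg _)
  exact hφ.apply_nonpos_of_nonpos hp hq hpq (hx ▸ hφ.le_convexEnvelope x)
    (hy ▸ hφ.le_convexEnvelope y)

lemma convexHull_preimage_zero_subset (I : ℝ → ℝ≥0∞) :
    convexHull ℝ (I ⁻¹' {0}) ⊆ {s | convexEnvelope I s = 0} :=
  convexHull_min (fun s hs => le_antisymm ((convexEnvelope_le s).trans (by rw [show I s = 0 from hs, EReal.coe_ennreal_zero]))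
    (convexEnvelope_nonneg s)) (convex_setOf_convexEnvelope_eq_zero I)

end convexEnvelope

theorem apply_eq_zero_of_isLeast_convexEnvelope_eq_zero {I : ℝ → ℝ≥0∞} {a : ℝ}
    (hI : LowerSemicontinuous I) (ha : IsLeast {s | convexEnvelope I s = 0} a) : I a = 0 := by
  by_contra hIa
  have hI' : LowerSemicontinuous fun t => (I t : EReal) :=
    continuous_coe_ennreal_ereal.comp_lowerSemicontinuous hI
      fun _ _ => EReal.coe_ennreal_le_coe_ennreal_iff.2
  obtain ⟨c, hc, hcI⟩ := EReal.lt_iff_exists_real_btwn.1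
    (EReal.coe_ennreal_pos.2 (pos_iff_ne_zero.2 hIa))
  obtain ⟨δ, hδ, hnear⟩ := Metric.nhds_basis_closedBall.eventually_iff.1 (hI' a c hcI)
  have henv : 0 < convexEnvelope I (a - δ) :=
    (convexEnvelope_nonneg _).lt_of_ne fun h => by linarith [ha.2 h.symm]
  obtain ⟨m, hm, hmenv⟩ := EReal.lt_iff_exists_real_btwn.1 henv
  obtain ⟨φ, hφ, hmφ⟩ := lt_convexEnvelope_iff.1 hmenv
  have hφa : φ a ≤ 0 := ha.1 ▸ hφ.le_convexEnvelope a
  have hfar : ∀ t ≤ a - δ, ((m * ((a - t) / δ) : ℝ) : EReal) ≤ I t := fun t ht => by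
    simpa using (hφ.le_apply_of_apply_nonpos (by linarith) ht hmφ.le hφa).trans (hφ.le t)
  set κ := min c m / (2 * δ)
  have hm' : 0 < m := EReal.coe_pos.1 hm
  have hκ : 0 < κ := div_pos (lt_min (EReal.coe_pos.1 hc) hm') (by positivity)
  have hκδ : 2 * κ * δ = min c m := by simp only [κ]; field_simp
  have hR := (IsConvexMinorant.affine (I := I) (α := -κ) (β := κ * (a + δ)) fun t => ?_)
    |>.le_convexEnvelope a
  · rw [ha.1, ← EReal.coe_zero, EReal.coe_le_coe_iff] at hR
    nlinarith
  have hcm := min_le_left c m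
  have hmc := min_le_right c m
  rcases le_or_gt t (a - δ) with hleft | hleft
  · refine le_trans (EReal.coe_le_coe_iff.2 ?_) (hfar t hleft)
    rw [mul_div_assoc', le_div_iff₀ hδ]
    nlinarith [mul_nonneg (sub_nonneg.2 hmc) (show 0 ≤ a + δ - t by linarith),
      mul_nonneg hm'.le (show 0 ≤ a - δ - t by linarith)]
  rcases le_or_gt t (a + δ) with hright | hright
  · refine le_trans (EReal.coe_le_coe_iff.2 ?_) (hnear ?_).le
    · nlinarith
    · rw [Real.closedBall_eq_Icc]
      exact ⟨hleft.le, hright⟩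
  · refine le_trans (EReal.coe_nonpos.2 ?_) (EReal.coe_ennreal_nonneg _)
    nlinarith

theorem apply_eq_zero_of_isGreatest_convexEnvelope_eq_zero {I : ℝ → ℝ≥0∞} {b : ℝ}
    (hI : LowerSemicontinuous I) (hb : IsGreatest {s | convexEnvelope I s = 0} b) : I b = 0 := by
  have hneg : IsLeast {s | convexEnvelope (fun t => I (-t)) s = 0} (-b) := by
    simp only [IsLeast, lowerBounds, Set.mem_ofPred_eq, convexEnvelope_comp_neg, neg_neg]
    exact ⟨hb.1, fun s hs => neg_le.2 (hb.2 hs)⟩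
  simpa using apply_eq_zero_of_isLeast_convexEnvelope_eq_zero (hI.comp continuous_neg) hneg

/-- **Zero set of the convex hull of a rate function.**
Let `I : ℝ → [0,+∞]` be lower semicontinuous and let `İ` be its convex hull,
`İ(s) = sup { φ(s) : φ : ℝ → (−∞,+∞] convex, φ ≤ I }`.  Then the convex hull of the
zero set `I⁻¹({0})` is contained in `İ⁻¹({0})`; and if `İ⁻¹({0}) = [a,b]` is a nonempty
compact interval, then `I(a) = 0` and `I(b) = 0`, so the convex hull of `I⁻¹({0})`
equals `İ⁻¹({0})`. -/
theorem convex_hull_zero_set_rate_function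
    (I : ℝ → ℝ≥0∞) (hIlsc : LowerSemicontinuous I)
    (brevI : ℝ → EReal)
    (hbrev : ∀ s : ℝ, brevI s = sSup {a : EReal | ∃ φ : ℝ → EReal,
        (∀ t : ℝ, φ t ≠ ⊥)
        ∧ (∀ x y p q : ℝ, 0 ≤ p → 0 ≤ q → p + q = 1 →
            φ (p * x + q * y) ≤ (p : EReal) * φ x + (q : EReal) * φ y)
        ∧ (∀ t : ℝ, φ t ≤ (I t : EReal))
        ∧ a = φ s}) :
    convexHull ℝ (I ⁻¹' {0}) ⊆ {s : ℝ | brevI s = 0}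
    ∧ ∀ a b : ℝ, a ≤ b → {s : ℝ | brevI s = 0} = Set.Icc a b →
        I a = 0 ∧ I b = 0 ∧ convexHull ℝ (I ⁻¹' {0}) = Set.Icc a b := by
  obtain rfl : brevI = convexEnvelope I :=
    funext fun s => (hbrev s).trans (sSup_convexMinorant_values_eq_convexEnvelope I s)
  refine ⟨convexHull_preimage_zero_subset I, fun a b hab hzero => ?_⟩
  have ha := apply_eq_zero_of_isLeast_convexEnvelope_eq_zero hIlsc (hzero ▸ isLeast_Icc hab)
  have hb := apply_eq_zero_of_isGreatest_convexEnvelope_eq_zero hIlsc (hzero ▸ isGreatest_Icc hab)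
  refine ⟨ha, hb, (hzero ▸ convexHull_preimage_zero_subset I).antisymm ?_⟩
  rw [← segment_eq_Icc hab, ← convexHull_pair]
  exact convexHull_mono (Set.pair_subset ha hb)
end

section
/- Let e : ℝ → (−∞,+∞] be a convex, lower semicontinuous function with e(0) = e(1) = 0. Define f(u) := sup_{α∈(0,1]} α^{−1}(−(1−α)u − e(α)), s_* := −inf_{α∈ℝ} e(α), s̲₀ := sup_{α∈(0,1]}(−e(α)/α) ∈ [0,+∞] and s̲₁ := sup_{α∈[0,1)}(−e(α)/(1−α)) ∈ [0,+∞] (these equal minus the right derivative of e at 0 and the left derivative of e at 1, respectively). Then s_* ∈ [0,+∞) and: f is non-increasing, convex, lower semicontinuous and takes values in [0,+∞]; f(u) = +∞ for every u < 0; f(0) = s̲₀; f(s_*) = s_*; if s̲₁ < +∞ then f(u) = 0 for every u ≥ s̲₁, while if s̲₁ = +∞ then f(u) → 0 as u → +∞. -/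
/-!
Since `e` is convex with `e 0 = e 1 = 0`, it is `≤ 0` (hence finite, being proper) on `[0,1]`
and `≥ 0` outside, and by lower semicontinuity it attains its minimum `-s_*` at some
`α₀ ∈ [0,1]`. Thus `f` is a supremum of real affine functions `u ↦ α⁻¹(-(1-α)u - e α)` of
nonpositive slope, which gives monotonicity, convexity and lower semicontinuity, while the term
`α = 1` vanishes. Writing the term as `u - (u + e α)/α` shows `f s_* ≤ s_*`, with equality at
`α = α₀`. For large `u` the terms with `α ≤ 1 - η` are nonpositive, and those with `α > 1 - η`
are small because `e > -ε` near `1`.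
-/

open Filter Set Topology

theorem EReal.nonneg_of_coe_mul_nonneg {x : EReal} {c : ℝ} (hc : 0 < c)
    (h : 0 ≤ (c : EReal) * x) : 0 ≤ x := by
  rcases EReal.mul_nonneg_iff.1 h with h | ⟨h, -⟩
  · exact h.2
  · exact absurd (EReal.coe_nonpos.1 h) hc.not_ge

/-- `ConvexOn` does not apply here: `EReal` is not an ordered module over `ℝ`. -/
def ConvexEReal (e : ℝ → EReal) : Prop :=
  ∀ x y p q : ℝ, 0 ≤ p → 0 ≤ q → p + q = 1 →
    e (p * x + q * y) ≤ (p : EReal) * e x + (q : EReal) * e y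

namespace ConvexEReal

variable {e : ℝ → EReal}

theorem nonpos_of_mem_Icc (hconv : ConvexEReal e) (he0 : e 0 = 0) (he1 : e 1 = 0) {α : ℝ}
    (hα : α ∈ Icc (0 : ℝ) 1) : e α ≤ 0 := by
  simpa [he0, he1] using hconv 1 0 α (1 - α) hα.1 (by linarith [hα.2]) (by ring)

theorem nonneg_of_notMem_Icc (hconv : ConvexEReal e) (he0 : e 0 = 0) (he1 : e 1 = 0) {α : ℝ}
    (hα : α ∉ Icc (0 : ℝ) 1) : 0 ≤ e α := by
  rcases not_and_or.1 hα with hα | hα <;> push Not at hα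
  · have h1α : 0 < 1 - α := by linarith
    have h := hconv α 1 (1 - α)⁻¹ (-α / (1 - α)) (by bound) (div_nonneg (by linarith) h1α.le)
      (by field_simp; ring)
    rw [show (1 - α)⁻¹ * α + -α / (1 - α) * 1 = 0 by field_simp; ring, he0, he1, mul_zero,
      add_zero] at h
    exact EReal.nonneg_of_coe_mul_nonneg (by bound) h
  · have h := hconv 0 α (1 - α⁻¹) α⁻¹ (by rw [sub_nonneg]; exact inv_le_one_of_one_le₀ hα.le)
      (by bound) (by ring)
    rw [show (1 - α⁻¹) * 0 + α⁻¹ * α = 1 by field_simp; ring, he0, he1, mul_zero, zero_add] at h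
    exact EReal.nonneg_of_coe_mul_nonneg (by bound) h

theorem exists_mem_Icc_isMinOn_univ (hconv : ConvexEReal e) (hlsc : LowerSemicontinuous e)
    (he0 : e 0 = 0) (he1 : e 1 = 0) : ∃ α₀ ∈ Icc (0 : ℝ) 1, IsMinOn e univ α₀ := by
  obtain ⟨α₀, hα₀, hmin⟩ :=
    (hlsc.lowerSemicontinuousOn _).exists_isMinOn (nonempty_Icc.2 zero_le_one) isCompact_Icc
  refine ⟨α₀, hα₀, isMinOn_univ_iff.2 fun α => ?_⟩
  by_cases hα : α ∈ Icc (0 : ℝ) 1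
  · exact hmin hα
  · exact (hconv.nonpos_of_mem_Icc he0 he1 hα₀).trans (hconv.nonneg_of_notMem_Icc he0 he1 hα)

theorem coe_toReal_of_mem_Icc (hconv : ConvexEReal e) (he0 : e 0 = 0) (he1 : e 1 = 0) {α : ℝ}
    (hα : α ∈ Icc (0 : ℝ) 1) (hbot : e α ≠ ⊥) : ((e α).toReal : EReal) = e α :=
  EReal.coe_toReal (ne_top_of_le_ne_top EReal.zero_ne_top (hconv.nonpos_of_mem_Icc he0 he1 hα)) hbot

end ConvexEReal

theorem LowerSemicontinuousAt.eventually_neg_lt_toReal {X : Type*} [TopologicalSpace X]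
    {e : X → EReal} {a : X} (hlsc : LowerSemicontinuousAt e a) (ha : e a = 0) {ε : ℝ}
    (hε : 0 < ε) : ∀ᶠ x in 𝓝 a, -ε < (e x).toReal := by
  filter_upwards [hlsc (-ε : ℝ) (show _ < e a by rw [ha]; exact_mod_cast neg_neg_of_pos hε)]
    with x hx
  generalize e x = y at hx ⊢
  induction y using EReal.rec with
  | bot => exact absurd hx not_lt_bot
  | coe y => exact_mod_cast hx
  | top => simpa using hε

noncomputable def hoeffdingFun (E : ℝ → ℝ) (u : ℝ) : EReal :=
  ⨆ α ∈ Ioc (0 : ℝ) 1, ((α⁻¹ * (-(1 - α) * u - E α) : ℝ) : EReal)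

section hoeffdingFun

variable {E : ℝ → ℝ}

theorem coe_le_hoeffdingFun {α : ℝ} (hα : α ∈ Ioc (0 : ℝ) 1) (u : ℝ) :
    ((α⁻¹ * (-(1 - α) * u - E α) : ℝ) : EReal) ≤ hoeffdingFun E u :=
  le_iSup₂ (f := fun α (_ : α ∈ Ioc (0 : ℝ) 1) => ((α⁻¹ * (-(1 - α) * u - E α) : ℝ) : EReal)) α hα

theorem hoeffdingFun_le_coe {u c : ℝ} (h : ∀ α ∈ Ioc (0 : ℝ) 1, α⁻¹ * (-(1 - α) * u - E α) ≤ c) :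
    hoeffdingFun E u ≤ c :=
  iSup₂_le fun α hα => EReal.coe_le_coe (h α hα)

theorem hoeffdingFun_antitone : Antitone (hoeffdingFun E) := fun u v huv =>
  iSup₂_mono fun α hα => EReal.coe_le_coe <|
    mul_le_mul_of_nonneg_left (by nlinarith [hα.2]) (inv_nonneg.2 hα.1.le)

theorem hoeffdingFun_convex (x y p q : ℝ) (hp : 0 ≤ p) (hq : 0 ≤ q) (hpq : p + q = 1) :
    hoeffdingFun E (p * x + q * y) ≤
      (p : EReal) * hoeffdingFun E x + (q : EReal) * hoeffdingFun E y := by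
  refine iSup₂_le fun α hα => ?_
  have hsplit : α⁻¹ * (-(1 - α) * (p * x + q * y) - E α)
      = p * (α⁻¹ * (-(1 - α) * x - E α)) + q * (α⁻¹ * (-(1 - α) * y - E α)) := by
    rw [← sub_eq_iff_eq_add'.2 hpq.symm]; ring
  rw [hsplit, EReal.coe_add, EReal.coe_mul, EReal.coe_mul]
  exact add_le_add (mul_le_mul_of_nonneg_left (coe_le_hoeffdingFun hα x) (EReal.coe_nonneg.2 hp))
    (mul_le_mul_of_nonneg_left (coe_le_hoeffdingFun hα y) (EReal.coe_nonneg.2 hq))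

theorem hoeffdingFun_lowerSemicontinuous : LowerSemicontinuous (hoeffdingFun E) :=
  lowerSemicontinuous_biSup fun _ _ =>
    (continuous_coe_real_ereal.comp (by fun_prop)).lowerSemicontinuous

theorem hoeffdingFun_nonneg (hE1 : E 1 = 0) (u : ℝ) : 0 ≤ hoeffdingFun E u := by
  simpa [hE1] using coe_le_hoeffdingFun (E := E) (right_mem_Ioc.2 zero_lt_one) u

theorem hoeffdingFun_eq_top (hE : ∀ α ∈ Ioc (0 : ℝ) 1, E α ≤ 0) {u : ℝ} (hu : u < 0) :
    hoeffdingFun E u = ⊤ := by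
  refine (EReal.eq_top_iff_forall_lt _).2 fun y => ?_
  have hd : u - (|y| + 1) < 0 := by linarith [abs_nonneg y]
  set α := u / (u - (|y| + 1)) with hα_def
  have hα : α ∈ Ioc (0 : ℝ) 1 :=
    ⟨div_pos_of_neg_of_neg hu hd, (div_le_one_of_neg hd).2 (by linarith [abs_nonneg y])⟩
  refine lt_of_lt_of_le (EReal.coe_lt_coe ?_) (coe_le_hoeffdingFun hα u)
  calc y < |y| + 1 := by linarith [le_abs_self y]
    _ = α⁻¹ * (-(1 - α) * u) := by rw [hα_def]; field_simp [hu.ne, hd.ne]; ring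
    _ ≤ α⁻¹ * (-(1 - α) * u - E α) :=
      mul_le_mul_of_nonneg_left (by linarith [hE α hα]) (inv_nonneg.2 hα.1.le)

theorem hoeffdingFun_neg_eq (hE0 : E 0 = 0) (hE1 : E 1 = 0) {α₀ : ℝ} (hα₀ : α₀ ∈ Icc (0 : ℝ) 1)
    (hmin : IsMinOn E (Icc 0 1) α₀) : hoeffdingFun E (-E α₀) = ((-E α₀ : ℝ) : EReal) := by
  refine le_antisymm (hoeffdingFun_le_coe fun α hα => ?_) ?_
  · rw [inv_mul_le_iff₀ hα.1]
    linarith [isMinOn_iff.1 hmin α (Ioc_subset_Icc_self hα)]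
  · rcases hα₀.1.eq_or_lt with rfl | hpos
    · simpa [hE0] using hoeffdingFun_nonneg hE1 0
    · refine le_of_eq_of_le (congrArg _ ?_) (coe_le_hoeffdingFun ⟨hpos, hα₀.2⟩ _)
      field_simp
      ring

theorem hoeffdingFun_eq_zero (hE1 : E 1 = 0) {u : ℝ}
    (h : ∀ α ∈ Ico (0 : ℝ) 1, -E α * (1 - α)⁻¹ ≤ u) : hoeffdingFun E u = 0 := by
  refine le_antisymm (hoeffdingFun_le_coe fun α hα => ?_) (hoeffdingFun_nonneg hE1 u)
  rcases hα.2.eq_or_lt with rfl | hlt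
  · simp [hE1]
  · have := (mul_inv_le_iff₀ (sub_pos.2 hlt)).1 (h α ⟨hα.1.le, hlt⟩)
    exact mul_nonpos_of_nonneg_of_nonpos (inv_nonneg.2 hα.1.le) (by linarith)

theorem hoeffdingFun_le_of_near_one {c ε η u : ℝ} (hε : 0 ≤ ε) (hlow : ∀ α ∈ Ioc (0 : ℝ) 1, c ≤ E α)
    (hnear : ∀ α ∈ Ioc (0 : ℝ) 1, 1 - η < α → -ε < E α) (hεu : ε ≤ u) (hcu : -c ≤ η * u) :
    hoeffdingFun E u ≤ ε := by
  refine hoeffdingFun_le_coe fun α hα => ?_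
  rw [inv_mul_le_iff₀ hα.1]
  rcases lt_or_ge (1 - η) α with hα' | hα'
  · nlinarith [hnear α hα hα', hα.2]
  · nlinarith [hlow α hα, hα.1]

theorem tendsto_hoeffdingFun_atTop (hE1 : E 1 = 0) {c : ℝ} (hlow : ∀ α ∈ Ioc (0 : ℝ) 1, c ≤ E α)
    (hnear : ∀ ε > 0, ∀ᶠ α in 𝓝 (1 : ℝ), -ε < E α) :
    Tendsto (hoeffdingFun E) atTop (𝓝 0) := by
  refine tendsto_order.2 ⟨fun a ha => Eventually.of_forall fun u =>
    ha.trans_le (hoeffdingFun_nonneg hE1 u), fun b hb => ?_⟩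
  obtain ⟨ε, hε, hεb⟩ := EReal.lt_iff_exists_real_btwn.1 hb
  obtain ⟨η, hη, hball⟩ := Metric.eventually_nhds_iff.1 (hnear ε (EReal.coe_pos.1 hε))
  have hnear' : ∀ α ∈ Ioc (0 : ℝ) 1, 1 - η < α → -ε < E α := fun α hα hα' =>
    hball (by rw [Real.dist_eq, abs_of_nonpos (by linarith [hα.2])]; linarith)
  filter_upwards [eventually_ge_atTop ε, eventually_ge_atTop (-c / η)] with u hεu hcu
  exact (hoeffdingFun_le_of_near_one (EReal.coe_pos.1 hε).le hlow hnear' hεu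
    ((div_le_iff₀' hη).1 hcu)).trans_lt hεb

end hoeffdingFun

/-- **Structure of the Hoeffding function of an entropic pressure.**
Let `e : ℝ → (−∞,+∞]` be convex, lower semicontinuous with `e(0) = e(1) = 0`.  With
`f(u) = sup_{α∈(0,1]} α⁻¹(−(1−α)u − e(α))`, `s_* = −inf_ℝ e`,
`s̲₀ = sup_{α∈(0,1]} (−e(α)/α)` and `s̲₁ = sup_{α∈[0,1)} (−e(α)/(1−α))`, one has:
`s_* ∈ [0,+∞)`; `f` is non-increasing, convex, lower semicontinuous with values in
`[0,+∞]`; `f(u) = +∞` for `u < 0`; `f(0) = s̲₀`; `f(s_*) = s_*`; if `s̲₁ < +∞` then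
`f(u) = 0` for all `u ≥ s̲₁`, while if `s̲₁ = +∞` then `f(u) → 0` as `u → +∞`. -/
theorem hoeffding_function_structure
    (e : ℝ → EReal)
    (hproper : ∀ α : ℝ, e α ≠ ⊥)
    (hconv : ∀ x y p q : ℝ, 0 ≤ p → 0 ≤ q → p + q = 1 →
      e (p * x + q * y) ≤ (p : EReal) * e x + (q : EReal) * e y)
    (hlsc : LowerSemicontinuous e)
    (he0 : e 0 = 0) (he1 : e 1 = 0)
    (f : ℝ → EReal)
    (hf : ∀ u : ℝ, f u = ⨆ α ∈ Set.Ioc (0 : ℝ) 1,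
        ((α⁻¹ : ℝ) : EReal) * (((-(1 - α) * u : ℝ) : EReal) - e α))
    (s0 s1 : EReal)
    (hs0 : s0 = ⨆ α ∈ Set.Ioc (0 : ℝ) 1, (-(e α)) * ((α⁻¹ : ℝ) : EReal))
    (hs1 : s1 = ⨆ α ∈ Set.Ico (0 : ℝ) 1, (-(e α)) * (((1 - α)⁻¹ : ℝ) : EReal)) :
    (∀ u v : ℝ, u ≤ v → f v ≤ f u)
    ∧ (∀ x y p q : ℝ, 0 ≤ p → 0 ≤ q → p + q = 1 →
        f (p * x + q * y) ≤ (p : EReal) * f x + (q : EReal) * f y)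
    ∧ LowerSemicontinuous f
    ∧ (∀ u : ℝ, 0 ≤ f u)
    ∧ (∀ u : ℝ, u < 0 → f u = ⊤)
    ∧ f 0 = s0
    ∧ (∃ sstar : ℝ, 0 ≤ sstar ∧ (⨅ α : ℝ, e α) = ((-sstar : ℝ) : EReal)
        ∧ f sstar = (sstar : EReal))
    ∧ (s1 ≠ ⊤ → ∀ u : ℝ, s1 ≤ (u : EReal) → f u = 0)
    ∧ (s1 = ⊤ → Tendsto f atTop (nhds 0)) := by
  replace hconv : ConvexEReal e := hconv
  set E : ℝ → ℝ := fun α => (e α).toReal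
  have hcoe : ∀ α ∈ Icc (0 : ℝ) 1, e α = E α := fun α hα =>
    (hconv.coe_toReal_of_mem_Icc he0 he1 hα (hproper α)).symm
  have hE0 : E 0 = 0 := by simp [E, he0]
  have hE1 : E 1 = 0 := by simp [E, he1]
  obtain ⟨α₀, hα₀, hmin⟩ := hconv.exists_mem_Icc_isMinOn_univ hlsc he0 he1
  have hEmin : IsMinOn E (Icc 0 1) α₀ := fun α hα => by
    simpa [hcoe α hα, hcoe α₀ hα₀] using isMinOn_univ_iff.1 hmin α
  have hs1_ge : ∀ α ∈ Ico (0 : ℝ) 1, ((-E α * (1 - α)⁻¹ : ℝ) : EReal) ≤ s1 := fun α hα => by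
    refine hs1 ▸ le_iSup₂_of_le α hα ?_
    rw [hcoe α (Ico_subset_Icc_self hα)]
    norm_cast
  have hf0 : f 0 = s0 := by
    rw [hf 0, hs0]
    exact biSup_congr fun α _ => by simp [mul_comm]
  obtain rfl : f = hoeffdingFun E := funext fun u => (hf u).trans <| biSup_congr fun α hα => by
    rw [hcoe α (Ioc_subset_Icc_self hα)]; norm_cast
  refine ⟨fun u v huv => hoeffdingFun_antitone huv, hoeffdingFun_convex,
    hoeffdingFun_lowerSemicontinuous, hoeffdingFun_nonneg hE1, fun u => hoeffdingFun_eq_top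
      fun α hα => EReal.toReal_nonpos (hconv.nonpos_of_mem_Icc he0 he1 (Ioc_subset_Icc_self hα)),
    hf0, ⟨-E α₀, ?_, ?_, hoeffdingFun_neg_eq hE0 hE1 hα₀ hEmin⟩,
    fun _ u hu => hoeffdingFun_eq_zero hE1 fun α hα =>
      EReal.coe_le_coe_iff.1 ((hs1_ge α hα).trans hu),
    fun _ => tendsto_hoeffdingFun_atTop hE1 (fun α hα => hEmin (Ioc_subset_Icc_self hα))
      fun ε => (hlsc.lowerSemicontinuousAt 1).eventually_neg_lt_toReal he1⟩
  · linarith [hE0 ▸ isMinOn_iff.1 hEmin 0 (left_mem_Icc.2 zero_le_one)]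
  · rw [neg_neg, ← hcoe α₀ hα₀]
    exact le_antisymm (iInf_le _ _) (le_iInf (isMinOn_univ_iff.1 hmin))
end
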